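/- arXiv:1604.06265 — 5 statements merged into one kernel-verified Lean document; each statement's English description precedes it below -/
import Mathlib

section
/- The determinant of the 20×20 integer matrix G (the Gram matrix of intersection numbers of the 20 chosen lines on the Fermat quartic surface, given explicitly) equals -64. -/
noncomputable section

def G : Matrix (Fin 20) (Fin 20) ℤ :=
  Matrix.of ![
    ![-2, 1, 1, 1, 1, 0, 0, 1, 0, 0, 1, 0, 0, 0, 1, 0, 0, 0, 0, 1],
    ![1, -2, 1, 1, 0, 1, 0, 0, 1, 0, 0, 1, 0, 0, 0, 1, 0, 0, 1, 0],
    ![1, 1, -2, 1, 0, 0, 1, 0, 0, 1, 0, 0, 1, 0, 0, 0, 0, 1, 0, 0],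
    ![1, 1, 1, -2, 0, 0, 0, 0, 0, 0, 0, 0, 0, 1, 0, 0, 1, 0, 0, 0],
    ![1, 0, 0, 0, -2, 1, 1, 1, 0, 0, 0, 0, 0, 1, 0, 0, 0, 0, 1, 0],
    ![0, 1, 0, 0, 1, -2, 1, 0, 1, 0, 1, 0, 0, 0, 1, 0, 0, 1, 0, 0],
    ![0, 0, 1, 0, 1, 1, -2, 0, 0, 1, 0, 1, 0, 0, 0, 1, 1, 0, 0, 0],
    ![1, 0, 0, 0, 1, 0, 0, -2, 1, 1, 0, 0, 1, 0, 0, 0, 0, 1, 0, 0],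
    ![0, 1, 0, 0, 0, 1, 0, 1, -2, 1, 0, 0, 0, 1, 0, 0, 1, 0, 0, 0],
    ![0, 0, 1, 0, 0, 0, 1, 1, 1, -2, 1, 0, 0, 0, 1, 0, 0, 0, 0, 1],
    ![1, 0, 0, 0, 0, 1, 0, 0, 0, 1, -2, 1, 1, 1, 0, 0, 1, 0, 0, 0],
    ![0, 1, 0, 0, 0, 0, 1, 0, 0, 0, 1, -2, 1, 0, 1, 0, 0, 1, 0, 1],
    ![0, 0, 1, 0, 0, 0, 0, 1, 0, 0, 1, 1, -2, 0, 0, 1, 0, 0, 1, 0],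
    ![0, 0, 0, 1, 1, 0, 0, 0, 1, 0, 1, 0, 0, -2, 1, 1, 0, 1, 0, 1],
    ![1, 0, 0, 0, 0, 1, 0, 0, 0, 1, 0, 1, 0, 1, -2, 1, 0, 0, 1, 0],
    ![0, 1, 0, 0, 0, 0, 1, 0, 0, 0, 0, 0, 1, 1, 1, -2, 0, 0, 0, 0],
    ![0, 0, 0, 1, 0, 0, 1, 0, 1, 0, 1, 0, 0, 0, 0, 0, -2, 1, 1, 1],
    ![0, 0, 1, 0, 0, 1, 0, 1, 0, 0, 0, 1, 0, 1, 0, 0, 1, -2, 1, 0],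
    ![0, 1, 0, 0, 1, 0, 0, 0, 0, 0, 0, 0, 1, 0, 1, 0, 1, 1, -2, 0],
    ![1, 0, 0, 0, 0, 0, 0, 0, 0, 1, 0, 1, 0, 1, 0, 0, 1, 0, 0, -2]]

/-!
Every trailing principal minor of `G` is nonzero (unlike the leading ones: the top-left
`3 × 3` block is singular), so Gaussian elimination from the last column backwards needs no
pivoting. Scaling each row to clear denominators gives an integer upper-triangular `E` with
`E * G` lower triangular, whence `(∏ Eᵢᵢ) * det G = ∏ (E * G)ᵢᵢ`, and the diagonals are
compared by evaluation.
-/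

theorem Matrix.prod_diag_mul_det_eq_prod_diag_mul {m R : Type*} [CommRing R] [Fintype m]
    [DecidableEq m] [LinearOrder m] {E M : Matrix m m R} (hE : E.IsUpperTriangular)
    (hEM : (E * M).IsLowerTriangular) :
    (∏ i, E i i) * M.det = ∏ i, (E * M) i i := by
  rw [← det_of_isUpperTriangular hE, ← det_mul, det_of_isLowerTriangular _ hEM]

def G_elim : Matrix (Fin 20) (Fin 20) ℤ :=
  Matrix.of ![
    ![85, 71, 86, 100, -21, -48, -31, -6, -23, -21, -30, -30, -4, -26, -34, -12, -16, -28, -16, -4],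
    ![0, 1929, 1119, 890, -549, -162, -9, -1019, -917, -1314, -760, 430, 794, -704, 34, 1022, -564, -52, 796, -1076],
    ![0, 0, 832, 221, -322, -348, 195, 2, -279, 178, -37, 114, 372, -393, -308, -67, 3, 55, -100, -49],
    ![0, 0, 0, 211, -30, -36, -51, -34, 71, -18, -11, -82, -116, 89, -76, -77, 141, 25, -28, 65],
    ![0, 0, 0, 0, 3170, 1272, 325, 1342, 797, -630, -1440, -2026, -1106, -50, -761, -796, -340, 453, 708, -1523],
    ![0, 0, 0, 0, 0, 1026, 150, -39, 441, 75, -55, -423, -608, -145, -83, -343, -35, 14, -356, -264],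
    ![0, 0, 0, 0, 0, 0, 231, -84, -63, 30, -22, 36, -38, -58, 1, 68, -14, -97, -74, -3],
    ![0, 0, 0, 0, 0, 0, 0, 63, 39, 27, -11, -27, -10, -17, -31, -29, 5, 4, -16, -6],
    ![0, 0, 0, 0, 0, 0, 0, 0, 60, 27, -4, -27, -38, 11, -17, -22, 19, -10, -23, 15],
    ![0, 0, 0, 0, 0, 0, 0, 0, 0, 279, 32, -39, -86, -13, 31, -34, -77, -130, -131, 75],
    ![0, 0, 0, 0, 0, 0, 0, 0, 0, 0, 370, -15, 17, -98, -217, -149, -1, -143, -172, -57],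
    ![0, 0, 0, 0, 0, 0, 0, 0, 0, 0, 0, 27, -1, -16, -9, -13, -13, -9, -16, -1],
    ![0, 0, 0, 0, 0, 0, 0, 0, 0, 0, 0, 0, 74, -31, -9, 17, -37, -36, -4, -34],
    ![0, 0, 0, 0, 0, 0, 0, 0, 0, 0, 0, 0, 0, 17, -7, 5, -37, -28, -36, -10],
    ![0, 0, 0, 0, 0, 0, 0, 0, 0, 0, 0, 0, 0, 0, 6, 3, -12, -10, -8, -6],
    ![0, 0, 0, 0, 0, 0, 0, 0, 0, 0, 0, 0, 0, 0, 0, 1, 0, 0, 0, 0],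
    ![0, 0, 0, 0, 0, 0, 0, 0, 0, 0, 0, 0, 0, 0, 0, 0, 2, 2, 2, 1],
    ![0, 0, 0, 0, 0, 0, 0, 0, 0, 0, 0, 0, 0, 0, 0, 0, 0, 2, 1, 0],
    ![0, 0, 0, 0, 0, 0, 0, 0, 0, 0, 0, 0, 0, 0, 0, 0, 0, 0, 1, 0],
    ![0, 0, 0, 0, 0, 0, 0, 0, 0, 0, 0, 0, 0, 0, 0, 0, 0, 0, 0, 1]]

lemma G_elim_isUpperTriangular : G_elim.IsUpperTriangular := by
  decide +kernel

lemma G_elim_mul_G_isLowerTriangular : (G_elim * G).IsLowerTriangular := by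
  decide +kernel

lemma prod_diag_G_elim_ne_zero : ∏ i, G_elim i i ≠ 0 := by
  decide +kernel

lemma prod_diag_G_elim_mul_G : ∏ i, (G_elim * G) i i = (∏ i, G_elim i i) * -64 := by
  decide +kernel

theorem G_det : G.det = -64 := by
  have h := Matrix.prod_diag_mul_det_eq_prod_diag_mul G_elim_isUpperTriangular
    G_elim_mul_G_isLowerTriangular
  rw [prod_diag_G_elim_mul_G] at h
  exact mul_left_cancel₀ prod_diag_G_elim_ne_zero h
end
end

section
/- The even lattice of rank 20 with the explicit Gram matrix G from Table 2 has discriminant group isomorphic to (ℤ/8ℤ)². -/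
noncomputable section

def U : Matrix (Fin 20) (Fin 20) ℤ :=
  Matrix.of ![
    ![1, 0, 0, 0, 0, 0, 0, 0, 0, 0, 0, 0, 0, 0, 0, 0, 0, 0, 0, 0],
    ![2, 1, 0, 0, 0, 0, 0, 0, 0, 0, 0, 0, 0, 0, 0, 0, 0, 0, 0, 0],
    ![1, 0, -1, 0, 0, 0, 0, 0, 0, 0, 0, 0, 0, 0, 0, 0, 0, 0, 0, 0],
    ![0, 0, 1, -1, 0, 0, 0, 0, 0, 0, 0, 0, 0, 0, 0, 0, 0, 0, 0, 0],
    ![-2, 1, 1, 3, -1, 0, 0, 0, 0, 0, 0, 0, 0, 0, 0, 0, 0, 0, 0, 0],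
    ![-5, 1, 4, 4, -3, -1, 0, 0, 0, 0, 0, 0, 0, 0, 0, 0, 0, 0, 0, 0],
    ![-2, 1, 1, 4, -2, -1, -1, 0, 0, 0, 0, 0, 0, 0, 0, 0, 0, 0, 0, 0],
    ![1, -2, 0, -6, 2, 1, 2, 0, 0, 1, 0, 0, 0, 0, 0, 0, 0, 0, 0, 0],
    ![-1, 3, 1, 7, -2, -1, -2, 0, 0, -2, -1, 0, 0, 0, 0, 0, 0, 0, 0, 0],
    ![-2, 0, 3, 2, -2, -2, 0, 0, 0, 2, -2, -1, 0, 0, 0, 0, 0, 0, 0, 0],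
    ![-4, 0, 5, 5, -4, -4, -1, 0, 0, 3, -3, -2, 0, 1, 0, 0, 0, 0, 0, 0],
    ![0, -1, -2, -4, 1, 2, 2, 0, 0, 1, 2, 2, 1, -2, 0, 0, 0, 0, 0, 0],
    ![3, 1, -3, 5, 3, 0, -5, 0, 2, -5, -2, -5, -5, 8, 1, 0, 0, 0, 0, 0],
    ![-9, -5, 1, -14, -5, 3, 12, 0, -2, 13, 6, 11, 9, -16, 0, 0, 1, 0, 0, 0],
    ![2, 1, 0, 4, 2, -1, -4, 0, 1, -5, -2, -4, -3, 7, -1, 0, 0, 1, 0, 0],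
    ![18, 12, 1, 33, 10, -8, -27, -3, 4, -32, -14, -25, -20, 40, -3, 1, -1, 2, 0, 0],
    ![-167, -121, -24, -307, -77, 79, 239, 43, -24, 288, 126, 216, 173, -349, 26, -16, 12, -11, 1, 0],
    ![1568, 1133, 221, 2883, 727, -741, -2248, -401, 229, -2707, -1184, -2033, -1629, 3286, -244, 149, -112, 105, -10, 1],
    ![13267, 9588, 1871, 24394, 6150, -6270, -19020, -3395, 1936, -22905, -10018, -17200, -13782, 27802, -2064, 1262, -948, 888, -84, 8],
    ![6611, 4779, 928, 12160, 3067, -3124, -9483, -1696, 965, -11423, -4994, -8574, -6872, 13866, -1026, 632, -472, 444, -40, 4]]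
def Uinv : Matrix (Fin 20) (Fin 20) ℤ :=
  Matrix.of ![
    ![1, 0, 0, 0, 0, 0, 0, 0, 0, 0, 0, 0, 0, 0, 0, 0, 0, 0, 0, 0],
    ![-2, 1, 0, 0, 0, 0, 0, 0, 0, 0, 0, 0, 0, 0, 0, 0, 0, 0, 0, 0],
    ![1, 0, -1, 0, 0, 0, 0, 0, 0, 0, 0, 0, 0, 0, 0, 0, 0, 0, 0, 0],
    ![1, 0, -1, -1, 0, 0, 0, 0, 0, 0, 0, 0, 0, 0, 0, 0, 0, 0, 0, 0],
    ![0, 1, -4, -3, -1, 0, 0, 0, 0, 0, 0, 0, 0, 0, 0, 0, 0, 0, 0, 0],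
    ![1, -2, 4, 5, 3, -1, 0, 0, 0, 0, 0, 0, 0, 0, 0, 0, 0, 0, 0, 0],
    ![0, 1, -1, -3, -1, 1, -1, 0, 0, 0, 0, 0, 0, 0, 0, 0, 0, 0, 0, 0],
    ![0, 0, 1, 1, 1, -1, 4, 3, 0, -2, 2, 6, -6, 10, -40, 30, 172, -312, 43, -8],
    ![1, 1, -3, -3, -3, 2, -5, -3, 0, 0, 2, 6, -2, 4, -16, 12, 64, -116, 16, -3],
    ![0, 0, 0, 1, 1, -1, 2, 1, 0, 0, 0, 0, 0, 0, 0, 0, 0, 0, 0, 0],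
    ![0, 1, -2, -2, -1, 1, -2, -2, -1, 0, 0, 0, 0, 0, 0, 0, 0, 0, 0, 0],
    ![1, 0, -1, 0, 0, -2, 8, 6, 2, -1, 0, 0, 0, 0, 0, 0, 0, 0, 0, 0],
    ![0, 0, 0, 0, 0, 1, -6, -3, 0, -2, 2, 1, 0, 0, 0, 0, 0, 0, 0, 0],
    ![0, 0, 1, 1, 1, -1, 3, 3, 1, -2, 1, 0, 0, 0, 0, 0, 0, 0, 0, 0],
    ![0, 1, -2, -2, -1, 1, -3, -2, 0, 1, -2, -7, 5, -8, 32, -24, -128, 232, -32, 6],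
    ![1, 0, -1, 0, 0, 0, 0, -1, -2, -1, 4, 16, -13, 23, -90, 67, 388, -704, 97, -18],
    ![0, 0, 0, 1, 1, -1, 2, 2, 0, -3, 2, 3, -4, 9, -32, 24, 128, -232, 32, -6],
    ![0, 1, -2, -2, -1, 1, -3, -4, -1, 5, -5, -10, 7, -12, 49, -36, -192, 348, -48, 9],
    ![1, 0, 0, 0, 0, 0, 1, 1, 0, -1, 2, 5, -3, 2, -13, 10, 29, -52, 7, -1],
    ![0, 0, 0, 0, 0, 1, -4, -3, -1, 1, 1, 5, -4, 3, -17, 11, 58, -87, 12, -2]]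
def V : Matrix (Fin 20) (Fin 20) ℤ :=
  Matrix.of ![
    ![0, 0, 0, 0, 0, 0, 0, 0, 0, 0, 0, 0, 0, 1, -2, 3, 22, -31, 30, 3],
    ![1, 0, -1, -1, 0, 0, 0, 0, 0, 0, -1, -4, 2, -4, 16, -13, -65, 154, -171, 38],
    ![0, 0, 0, 0, 0, 0, 0, 0, 0, 0, 0, 0, 0, 0, 0, 0, 5, 18, -23, 13],
    ![0, 0, 0, 0, 0, 0, 0, 0, 0, 0, 0, 0, 0, 0, 0, 1, 23, -24, 22, 6],
    ![0, 0, 1, 1, 0, 0, 0, 0, 0, -1, 1, 2, -2, 3, -12, 8, 49, -89, 99, -20],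
    ![0, 1, -2, -2, -1, 0, 1, 1, 0, -2, 2, 4, -4, 5, -22, 15, 80, -145, 162, -34],
    ![0, 0, 0, 1, 0, 0, -1, -1, 0, 0, 0, -1, 1, -3, 10, -8, -55, 100, -109, 18],
    ![0, 0, 0, 0, 0, 0, 0, 0, 0, 0, 0, 0, 0, 0, 0, 0, 1, -11, 11, -1],
    ![0, 0, 0, 0, 1, -1, 3, 2, 0, -1, 0, -1, -1, 0, -2, 2, 18, -51, 55, -10],
    ![0, 0, 0, 0, 0, 0, 0, 0, 0, 0, 0, 0, 0, 0, 0, 2, 0, -27, 28, -5],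
    ![0, 0, 0, 0, 0, 0, 0, 0, 0, 1, 0, 2, -1, 2, -8, 7, 32, -76, 84, -18],
    ![0, 0, 0, 0, 0, 1, -4, -3, -1, 1, 0, 1, 0, 1, -3, 2, -2, 4, -2, -4],
    ![0, 0, 0, 0, 0, 0, 1, 0, 0, 3, -3, -5, 4, -6, 25, -20, -120, 236, -258, 46],
    ![0, 0, 0, 0, 0, 0, 0, 0, 0, 0, 0, 0, 0, 0, 0, 1, 0, -18, 20, -6],
    ![0, 0, 0, 0, 0, 0, 0, 0, 0, 0, 0, 0, 0, 0, 1, -1, -24, 44, -46, 4],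
    ![0, 0, 0, 0, 0, 0, 0, 0, 1, 2, -4, -13, 10, -18, 71, -54, -326, 610, -670, 122],
    ![0, 0, 0, 0, 0, 0, 0, 0, 0, 0, 1, 4, -2, 3, -14, 11, 84, -171, 188, -36],
    ![0, 0, 0, 0, 0, 0, 0, 1, 0, -3, 4, 10, -7, 12, -49, 35, 205, -372, 412, -80],
    ![0, 0, 0, 0, 0, 0, 0, 0, 0, 0, 0, 1, -1, 3, -10, 5, 50, -73, 84, -20],
    ![0, 0, 0, 0, 0, 0, 0, 0, 0, 0, 0, 0, 1, 1, -1, 4, 23, -78, 84, -16]]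
def Vinv : Matrix (Fin 20) (Fin 20) ℤ :=
  Matrix.of ![
    ![-2, 1, 1, 1, 1, 0, 0, 1, 0, 0, 1, 0, 0, 0, 1, 0, 0, 0, 0, 1],
    ![-3, 0, 3, 3, 2, 1, 0, 2, 1, 0, 2, 1, 0, 0, 2, 1, 0, 0, 1, 2],
    ![-3, 0, 3, 0, 1, 0, -1, 1, 0, -1, 1, 0, -1, 0, 1, 0, 0, -1, 0, 1],
    ![0, 0, -3, 3, 0, 0, 1, 0, 0, 1, 0, 0, 1, -1, 0, 0, -1, 1, 0, 0],
    ![8, 0, 0, -6, 0, 0, 0, -3, 1, 1, -2, 1, 1, 2, -2, 1, 3, 1, 0, -2],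
    ![16, 0, -8, -8, 0, 0, 0, -8, 0, 4, -6, 1, 4, 1, -6, 1, 4, 3, -2, -5],
    ![8, 0, 0, -8, 0, 0, 0, -4, 0, 0, -3, 0, 1, 2, -3, 0, 3, 0, -1, -2],
    ![-8, 0, -4, 11, 0, 0, 0, 4, 0, 0, 3, 0, 0, -4, 3, 0, -4, 1, 0, 2],
    ![10, 0, 3, -11, 0, 0, 0, -5, 0, 2, -2, 0, 0, 4, -4, 1, 4, 0, 1, -3],
    ![5, 0, -4, -3, 0, 0, 0, -2, 0, -3, 1, 0, 0, -2, -3, 0, 0, 0, -2, -1],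
    ![11, 0, -7, -8, 0, 0, 0, -5, 0, -5, 0, 0, 0, -4, -6, 0, 1, 0, -4, -2],
    ![-4, 0, 3, 3, 0, 0, 0, 3, 0, 0, 0, 0, 0, 3, 3, 0, 0, 0, 1, 1],
    ![-1, 0, 0, -1, 0, 0, 0, -2, 0, 3, 0, 0, 0, -7, -1, 0, 0, 0, 0, 1],
    ![1, 0, 4, 0, 0, 0, 0, 6, 0, -9, 0, 0, 0, 17, 2, 0, 0, 0, 0, 0],
    ![0, 0, -4, 2, 0, 0, 0, -2, 0, 4, 0, 0, 0, -9, 1, 0, 0, 0, 0, 0],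
    ![0, 0, -16, 4, 0, 0, 0, -12, 0, 22, 0, 0, 0, -47, 0, 0, 0, 0, 0, 0],
    ![0, 0, 142, -35, 0, 0, 0, 96, 0, -190, 0, 0, 0, 415, 0, 0, 0, 0, 0, 0],
    ![0, 0, -1337, 330, 0, 0, 0, -905, 0, 1788, 0, 0, 0, -3906, 0, 0, 0, 0, 0, 0],
    ![0, 0, -1414, 349, 0, 0, 0, -957, 0, 1891, 0, 0, 0, -4131, 0, 0, 0, 0, 0, 0],
    ![0, 0, -705, 174, 0, 0, 0, -477, 0, 943, 0, 0, 0, -2060, 0, 0, 0, 0, 0, 0]]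

def d : Fin 20 → ℤ := fun i => if 18 ≤ (i : ℕ) then 8 else 1

def D : Matrix (Fin 20) (Fin 20) ℤ := Matrix.diagonal d

set_option maxHeartbeats 8000000 in
lemma hUinvU : Uinv * U = 1 := by decide
set_option maxHeartbeats 8000000 in
lemma hUUinv : U * Uinv = 1 := by decide
set_option maxHeartbeats 8000000 in
lemma hGV : G * V = Uinv * D := by decide
set_option maxHeartbeats 8000000 in
lemma hUG : U * G = D * Vinv := by decide

def castLM : ℤ →ₗ[ℤ] ZMod 8 := (Int.castAddHom (ZMod 8)).toIntLinearMap

def phi : (Fin 20 → ℤ) →ₗ[ℤ] ZMod 8 × ZMod 8 :=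
  LinearMap.prod
    (castLM ∘ₗ (LinearMap.proj (18 : Fin 20)) ∘ₗ Matrix.mulVecLin U)
    (castLM ∘ₗ (LinearMap.proj (19 : Fin 20)) ∘ₗ Matrix.mulVecLin U)

lemma phi_apply (v : Fin 20 → ℤ) :
    phi v = (((U.mulVec v 18 : ℤ) : ZMod 8), ((U.mulVec v 19 : ℤ) : ZMod 8)) := rfl

lemma phi_surjective : Function.Surjective phi := by
  rintro ⟨x, y⟩
  obtain ⟨a, ha⟩ := ZMod.intCast_surjective x
  obtain ⟨b, hb⟩ := ZMod.intCast_surjective y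
  refine ⟨Uinv.mulVec (fun i => if i = 18 then a else if i = 19 then b else 0), ?_⟩
  rw [phi_apply, Matrix.mulVec_mulVec, hUUinv, Matrix.one_mulVec]
  simp [ha, hb]

lemma ker_phi : LinearMap.ker phi = LinearMap.range (Matrix.toLin' G) := by
  ext v
  constructor
  · intro hv
    rw [LinearMap.mem_ker, phi_apply, Prod.mk_eq_zero] at hv
    obtain ⟨h1, h2⟩ := hv
    rw [ZMod.intCast_zmod_eq_zero_iff_dvd] at h1 h2
    obtain ⟨a, ha⟩ := h1
    obtain ⟨b, hb⟩ := h2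
    refine ⟨V.mulVec (fun i => if i = 18 then a else if i = 19 then b else U.mulVec v i), ?_⟩
    rw [Matrix.toLin'_apply, Matrix.mulVec_mulVec, hGV, ← Matrix.mulVec_mulVec]
    have hD : D.mulVec (fun i => if i = 18 then a else if i = 19 then b else U.mulVec v i)
        = U.mulVec v := by
      funext i
      rw [D, Matrix.mulVec_diagonal]
      by_cases h18 : i = 18
      · subst h18; simpa [d] using ha.symm
      · by_cases h19 : i = 19
        · subst h19; simpa [d] using hb.symm
        · have h18' : (i : ℕ) ≠ 18 := fun h => h18 (Fin.ext h)
          have h19' : (i : ℕ) ≠ 19 := fun h => h19 (Fin.ext h)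
          have hi : ¬ (18 ≤ (i : ℕ)) := by have := i.isLt; omega
          rw [d]
          simp only [if_neg hi, if_neg h18, if_neg h19, one_mul]
    rw [hD, Matrix.mulVec_mulVec, hUinvU, Matrix.one_mulVec]
  · rintro ⟨w, rfl⟩
    rw [LinearMap.mem_ker, Matrix.toLin'_apply, phi_apply, Matrix.mulVec_mulVec, hUG,
      ← Matrix.mulVec_mulVec]
    have h18 : (D.mulVec (Vinv.mulVec w)) 18 = 8 * (Vinv.mulVec w) 18 := by
      rw [D, Matrix.mulVec_diagonal, show d 18 = 8 from rfl]
    have h19 : (D.mulVec (Vinv.mulVec w)) 19 = 8 * (Vinv.mulVec w) 19 := by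
      rw [D, Matrix.mulVec_diagonal, show d 19 = 8 from rfl]
    rw [Prod.mk_eq_zero, h18, h19]
    constructor <;>
    · rw [ZMod.intCast_zmod_eq_zero_iff_dvd]
      exact dvd_mul_of_dvd_left (by norm_num) _

theorem disc_group :
    Nonempty (((Fin 20 → ℤ) ⧸ LinearMap.range (Matrix.toLin' G)) ≃ₗ[ℤ]
      (ZMod 8 × ZMod 8)) :=
  ⟨(Submodule.quotEquivOfEq _ _ ker_phi.symm).trans
    (phi.quotKerEquivOfSurjective phi_surjective)⟩
end
end

section
/- In the lattice ℤ^20 with Gram matrix G of Table 2, the set of vectors v satisfying ⟨v,h48⟩ = d and ⟨v,v⟩ = 4 is empty for d = 1, 2, 3, and consists of exactly the single vector h48 for d = 4. -/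
noncomputable section

def bf (x y : Fin 20 → ℤ) : ℤ := dotProduct x (G.mulVec y)
def h48 : Fin 20 → ℤ := ![1, 1, 1, 1, 0, 0, 0, 0, 0, 0, 0, 0, 0, 0, 0, 0, 0, 0, 0, 0]

/-!
The quadratic form `⟨v, h48⟩² - 2⟨v, v⟩` has matrix `(G h48)(G h48)ᵀ - 2G`, and an explicit
`LDLᵀ` factorization shows that it is positive definite. Hence `⟨·,·⟩` is negative definite on
`h48ᗮ` while `⟨h48, h48⟩ = 4 > 0`, and the reverse Cauchy–Schwarz inequality of such a Lorentzian
form gives `4⟨v, v⟩ ≤ ⟨v, h48⟩²`, with equality only for `v` proportional to `h48`. For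
`⟨v, v⟩ = 4` this forces `⟨v, h48⟩² ≥ 16`, and `⟨v, h48⟩ = 4` forces `4v = 4 h48`.
-/

open Matrix

namespace LinearMap.BilinForm

variable {R M : Type*} [CommRing R] [AddCommGroup M] [Module R M] {B : LinearMap.BilinForm R M}

lemma apply_smul_sub_smul_right (v h : M) : B (B h h • v - B v h • h) h = 0 := by
  simp only [map_sub, map_smul, LinearMap.sub_apply, LinearMap.smul_apply, smul_eq_mul]
  ring

lemma IsSymm.apply_smul_sub_smul_self (hB : B.IsSymm) (v h : M) :
    B (B h h • v - B v h • h) (B h h • v - B v h • h) = B h h * (B h h * B v v - B v h ^ 2) := by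
  simp only [map_sub, map_smul, LinearMap.sub_apply, LinearMap.smul_apply, smul_eq_mul,
    hB.eq h v]
  ring

variable [LinearOrder R] {h : M}

theorem IsSymm.mul_apply_self_le_sq_of_negDef_orthogonal [IsStrictOrderedRing R] (hB : B.IsSymm)
    (hh : 0 < B h h) (hneg : ∀ w, B w h = 0 → w ≠ 0 → B w w < 0) (v : M) : B h h * B v v ≤ B v h ^ 2 := by
  set w := B h h • v - B v h • h
  have hw : B w w ≤ 0 := by
    rcases eq_or_ne w 0 with hw | hw
    · simp [hw]
    · exact (hneg w (apply_smul_sub_smul_right v h) hw).le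
  rw [hB.apply_smul_sub_smul_self] at hw
  nlinarith

theorem IsSymm.smul_eq_smul_of_mul_apply_self_eq_sq (hB : B.IsSymm)
    (hneg : ∀ w, B w h = 0 → w ≠ 0 → B w w < 0) {v : M} (hv : B h h * B v v = B v h ^ 2) :
    B h h • v = B v h • h := by
  by_contra hw
  have := hneg _ (apply_smul_sub_smul_right v h) (sub_ne_zero.mpr hw)
  rw [hB.apply_smul_sub_smul_self, hv, sub_self, mul_zero] at this
  exact this.false

end LinearMap.BilinForm

lemma bf_eq_toBilin' (x y : Fin 20 → ℤ) : bf x y = G.toBilin' x y :=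
  (toBilin'_apply' G x y).symm

lemma isSymm_toBilin'_G : G.toBilin'.IsSymm :=
  isSymm_toBilin'_iff_isSymm.mpr (by decide +kernel)

lemma bf_h48_h48 : bf h48 h48 = 4 := by decide +kernel

-- Gaussian elimination on `(G h48)(G h48)ᵀ - 2G`, with each row and pivot rescaled to be integral.
def ldlFactor : Matrix (Fin 20) (Fin 20) ℤ :=
  Matrix.of ![
    ![5, -1, -1, -1, -1, 1, 1, -1, 1, 1, -1, 1, 1, 1, -1, 1, 1, 1, 1, -1],
    ![0, 12, -3, -3, 2, -2, 3, 2, -2, 3, 2, -2, 3, 3, 2, -2, 3, 3, -2, 2],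
    ![0, 0, 9, -3, 2, 2, -1, 2, 2, -1, 2, 2, -1, 3, 2, 2, 3, -1, 2, 2],
    ![0, 0, 0, 3, 1, 1, 1, 1, 1, 1, 1, 1, 1, 0, 1, 1, 0, 1, 1, 1],
    ![0, 0, 0, 0, 6, -2, -2, -3, 1, 1, 0, 1, 1, -2, 0, 1, 1, 1, -2, 0],
    ![0, 0, 0, 0, 0, 16, -8, 0, -8, 4, -6, 1, 4, 1, -6, 1, 4, -5, -2, 3],
    ![0, 0, 0, 0, 0, 0, 8, 0, 0, -4, 0, -3, 2, 1, 0, -3, -2, -1, 0, 3],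
    ![0, 0, 0, 0, 0, 0, 0, 3, -1, -1, 0, 1, -1, 0, 0, 1, 1, -1, 0, 0],
    ![0, 0, 0, 0, 0, 0, 0, 0, 8, -4, 0, 1, 2, -3, 0, 1, -2, -1, 0, 3],
    ![0, 0, 0, 0, 0, 0, 0, 0, 0, 4, -2, 1, 0, 1, -2, 1, 0, -1, 2, -1],
    ![0, 0, 0, 0, 0, 0, 0, 0, 0, 0, 3, -1, -1, -1, -1, 1, -1, 0, 1, 0],
    ![0, 0, 0, 0, 0, 0, 0, 0, 0, 0, 0, 8, -4, 2, -4, -2, -1, -3, 1, -3],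
    ![0, 0, 0, 0, 0, 0, 0, 0, 0, 0, 0, 0, 4, 2, 0, -2, 1, -1, -1, -1],
    ![0, 0, 0, 0, 0, 0, 0, 0, 0, 0, 0, 0, 0, 4, -2, 0, -1, -1, 1, -1],
    ![0, 0, 0, 0, 0, 0, 0, 0, 0, 0, 0, 0, 0, 0, 6, -4, 1, -3, -1, -3],
    ![0, 0, 0, 0, 0, 0, 0, 0, 0, 0, 0, 0, 0, 0, 0, 2, 1, 0, -1, 0],
    ![0, 0, 0, 0, 0, 0, 0, 0, 0, 0, 0, 0, 0, 0, 0, 0, 2, -1, 0, -1],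
    ![0, 0, 0, 0, 0, 0, 0, 0, 0, 0, 0, 0, 0, 0, 0, 0, 0, 3, -2, -1],
    ![0, 0, 0, 0, 0, 0, 0, 0, 0, 0, 0, 0, 0, 0, 0, 0, 0, 0, 2, 1],
    ![0, 0, 0, 0, 0, 0, 0, 0, 0, 0, 0, 0, 0, 0, 0, 0, 0, 0, 0, 1]]

def ldlDiag : Fin 20 → ℤ := ![72, 12, 20, 160, 40, 5, 15, 120, 15, 45, 120, 15, 45, 45, 15, 120, 180, 60, 120, 360]

lemma smul_vecMulVec_sub_eq_ldl :
    (360 : ℤ) • (vecMulVec (G *ᵥ h48) (G *ᵥ h48) - 2 • G) =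
      ldlFactorᵀ * diagonal ldlDiag * ldlFactor := by
  decide +kernel

lemma posDef_ldl : (ldlFactorᵀ * diagonal ldlDiag * ldlFactor).PosDef := by
  have hdet : ldlFactor.det ≠ 0 := by
    rw [det_of_isUpperTriangular (by decide +kernel)]
    decide +kernel
  simpa only [conjTranspose_eq_transpose_of_trivial] using
    (PosDef.diagonal (by decide +kernel)).conjTranspose_mul_mul_same
      (mulVec_injective_of_det_ne_zero hdet)

lemma sq_bf_h48_sub_two_mul_pos {x : Fin 20 → ℤ} (hx : x ≠ 0) :
    0 < bf x h48 ^ 2 - 2 * bf x x := by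
  have := posDef_ldl.dotProduct_mulVec_pos hx
  rw [← smul_vecMulVec_sub_eq_ldl] at this
  simp only [star_trivial, smul_mulVec, sub_mulVec, vecMulVec_mulVec] at this
  simp only [dotProduct_smul, dotProduct_sub, dotProduct_add, op_smul_eq_smul, smul_eq_mul,
    two_nsmul, dotProduct_comm (G *ᵥ h48) x] at this
  rw [bf, bf, sq]
  linarith

lemma toBilin'_G_self_neg_of_orthogonal_h48 (w : Fin 20 → ℤ) (hw : G.toBilin' w h48 = 0)
    (hw0 : w ≠ 0) : G.toBilin' w w < 0 := by
  rw [← bf_eq_toBilin'] at hw ⊢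
  have := sq_bf_h48_sub_two_mul_pos hw0
  rw [hw] at this
  linarith

lemma four_mul_bf_self_le_sq_bf_h48 (v : Fin 20 → ℤ) : 4 * bf v v ≤ bf v h48 ^ 2 := by
  have := isSymm_toBilin'_G.mul_apply_self_le_sq_of_negDef_orthogonal
    (by rw [← bf_eq_toBilin', bf_h48_h48]; norm_num) toBilin'_G_self_neg_of_orthogonal_h48 v
  simpa only [← bf_eq_toBilin', bf_h48_h48] using this

lemma eq_h48_of_bf_h48_eq_four {v : Fin 20 → ℤ} (hd : bf v h48 = 4) (hv : bf v v = 4) :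
    v = h48 := by
  have := isSymm_toBilin'_G.smul_eq_smul_of_mul_apply_self_eq_sq
    toBilin'_G_self_neg_of_orthogonal_h48 (v := v)
    (by simp only [← bf_eq_toBilin', hd, hv, bf_h48_h48]; norm_num)
  rw [← bf_eq_toBilin', ← bf_eq_toBilin', hd, bf_h48_h48] at this
  exact smul_right_injective _ four_ne_zero this

theorem H_d_small :
    ({v : Fin 20 → ℤ | bf v h48 = 1 ∧ bf v v = 4} = ∅) ∧
    ({v : Fin 20 → ℤ | bf v h48 = 2 ∧ bf v v = 4} = ∅) ∧
    ({v : Fin 20 → ℤ | bf v h48 = 3 ∧ bf v v = 4} = ∅) ∧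
    ({v : Fin 20 → ℤ | bf v h48 = 4 ∧ bf v v = 4} = {h48}) := by
  have not_mem {d : ℤ} (hd : d ^ 2 < 16) : {v : Fin 20 → ℤ | bf v h48 = d ∧ bf v v = 4} = ∅ :=
    Set.eq_empty_of_forall_notMem fun v ⟨hvd, hv⟩ => by
      have := four_mul_bf_self_le_sq_bf_h48 v
      rw [hvd, hv] at this
      omega
  refine ⟨not_mem (by norm_num), not_mem (by norm_num), not_mem (by norm_num), ?_⟩
  exact Set.eq_singleton_iff_unique_mem.mpr
    ⟨⟨bf_h48_h48, bf_h48_h48⟩, fun v ⟨hd, hv⟩ => eq_h48_of_bf_h48_eq_four hd hv⟩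
end
end

section
/- The complex surface in ℙ³ defined by Ψ = y₁³y₂ + y₁y₂³ + y₃³y₄ + y₃y₄³ + (y₁y₄ + y₂y₃)(A(y₁y₃+y₂y₄) + B(y₁y₂ - y₃y₄)) = 0, where A = -1 - 2√(-2) and B = 3 + A, is smooth, i.e., Ψ and its four partial derivatives have no common nonzero zero in ℂ⁴. -/
set_option maxHeartbeats 2000000


noncomputable section

def psi {R : Type*} [CommRing R] (A B : R) (y : Fin 4 → R) : R :=
  (y 0) ^ 3 * y 1 + y 0 * (y 1) ^ 3 + (y 2) ^ 3 * y 3 + y 2 * (y 3) ^ 3 +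
    (y 0 * y 3 + y 1 * y 2) *
      (A * (y 0 * y 2 + y 1 * y 3) + B * (y 0 * y 1 - y 2 * y 3))
def ζ : ℂ := Complex.exp (2 * Real.pi * Complex.I / 8)
def A : ℂ := -1 - 2 * ζ - 2 * ζ ^ 3
def B : ℂ := 3 + A

def PsiPoly : MvPolynomial (Fin 4) ℂ :=
  psi (MvPolynomial.C A) (MvPolynomial.C B) (fun i => MvPolynomial.X i)

lemma zeta4 : ζ ^ 4 = -1 := by
  have : ζ ^ 4 = Complex.exp (Real.pi * Complex.I) := by
    rw [ζ, ← Complex.exp_nat_mul]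
    ring_nf
  rw [this, Complex.exp_pi_mul_I]

lemma hArel : A ^ 2 + 2 * A + 9 = 0 := by
  have h := zeta4
  rw [A]; linear_combination (4 * ζ ^ 2 + 8) * h

lemma hB : B = 3 + A := rfl

lemma grad0 (y : Fin 4 → ℂ) :
    MvPolynomial.eval y (MvPolynomial.pderiv (0 : Fin 4) PsiPoly) =
      (-3*y 2*y 3^2 + 3*y 1^2*y 2 + y 1^3 + 6*y 0*y 1*y 3 + 3*y 0^2*y 1 - A*y 2*y 3^2 + A*y 1*y 3^2 + A*y 1*y 2^2 + A*y 1^2*y 2 + 2*A*y 0*y 2*y 3 + 2*A*y 0*y 1*y 3) := by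
  simp [PsiPoly, psi, MvPolynomial.pderiv_mul, MvPolynomial.pderiv_pow,
    Pi.single_apply, hB]
  ring

lemma grad1 (y : Fin 4 → ℂ) :
    MvPolynomial.eval y (MvPolynomial.pderiv (1 : Fin 4) PsiPoly) =
      (-3*y 2^2*y 3 + 6*y 0*y 1*y 2 + 3*y 0*y 1^2 + 3*y 0^2*y 3 + y 0^3 - A*y 2^2*y 3 + 2*A*y 1*y 2*y 3 + A*y 0*y 3^2 + A*y 0*y 2^2 + 2*A*y 0*y 1*y 2 + A*y 0^2*y 3) := by
  simp [PsiPoly, psi, MvPolynomial.pderiv_mul, MvPolynomial.pderiv_pow,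
    Pi.single_apply, hB]
  ring

lemma grad2 (y : Fin 4 → ℂ) :
    MvPolynomial.eval y (MvPolynomial.pderiv (2 : Fin 4) PsiPoly) =
      (y 3^3 + 3*y 2^2*y 3 - 6*y 1*y 2*y 3 - 3*y 0*y 3^2 + 3*y 0*y 1^2 - 2*A*y 1*y 2*y 3 + A*y 1^2*y 3 - A*y 0*y 3^2 + 2*A*y 0*y 1*y 2 + A*y 0*y 1^2 + A*y 0^2*y 3) := by
  simp [PsiPoly, psi, MvPolynomial.pderiv_mul, MvPolynomial.pderiv_pow,
    Pi.single_apply, hB]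
  ring

lemma grad3 (y : Fin 4 → ℂ) :
    MvPolynomial.eval y (MvPolynomial.pderiv (3 : Fin 4) PsiPoly) =
      (3*y 2*y 3^2 + y 2^3 - 3*y 1*y 2^2 - 6*y 0*y 2*y 3 + 3*y 0^2*y 1 - A*y 1*y 2^2 + A*y 1^2*y 2 - 2*A*y 0*y 2*y 3 + 2*A*y 0*y 1*y 3 + A*y 0^2*y 2 + A*y 0^2*y 1) := by
  simp [PsiPoly, psi, MvPolynomial.pderiv_mul, MvPolynomial.pderiv_pow,
    Pi.single_apply, hB]
  ring

theorem X56_smooth :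
    ∀ y : Fin 4 → ℂ,
      MvPolynomial.eval y PsiPoly = 0 ∧
        (∀ i : Fin 4, MvPolynomial.eval y (MvPolynomial.pderiv i PsiPoly) = 0) →
      y = 0 := by
  rintro y ⟨-, hd⟩
  have hA := hArel
  have h0 := (grad0 y).symm.trans (hd 0)
  have h1 := (grad1 y).symm.trans (hd 1)
  have h2 := (grad2 y).symm.trans (hd 2)
  have h3 := (grad3 y).symm.trans (hd 3)
  have e0 : y 0 ^ 9 = 0 := by
    linear_combination ((1298832751805629/570841602121728 : ℂ)*y 2*y 3^5 + (1590489546867769/84569126240256 : ℂ)*y 2^3*y 3^3 + (17351390294212663/761122136162304 : ℂ)*y 2^5*y 3 - (8313004132211/40774400151552 : ℂ)*y 1*y 3^5 - (136503122021712889/2283366408486912 : ℂ)*y 1*y 2^2*y 3^3 - (2218215080914295/42284563120128 : ℂ)*y 1*y 2^4*y 3 + (11583237129650905/285420801060864 : ℂ)*y 1^2*y 2*y 3^3 + (21110210962083023/190280534040576 : ℂ)*y 1^2*y 2^3*y 3 + (41565020661055/40774400151552 : ℂ)*y 1^3*y 3^3 + (1013277347067655/36243911245824 : ℂ)*y 1^3*y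 2^2*y 3 + (5081641446873335/190280534040576 : ℂ)*y 1^4*y 2*y 3 - (6411462904423519/1141683204243456 : ℂ)*y 0*y 2*y 3^4 + (5389866079813805/190280534040576 : ℂ)*y 0*y 2^3*y 3^2 + (556057404745/117493383168 : ℂ)*y 0*y 2^5 + (620806385258635/27845931810816 : ℂ)*y 0*y 1*y 3^4 + (506709608995343/4817228709888 : ℂ)*y 0*y 1*y 2^2*y 3^2 + (6296466979811371/380561068081152 : ℂ)*y 0*y 1*y 2^4 + (38444061864233345/761122136162304 : ℂ)*y 0*y 1^2*y 2*y 3^2 + (64593207311985407/761122136162304 : ℂ)*y 0*y 1^2*y 2^3 - (5468140876908125/761122136162304 : ℂ)*y 0*y 1^3*y 3^2 + (5164734786179077/63426844680192 : ℂ)*y 0*y 1^3*y 2^2 + (20249128897826279/380561068081152 : ℂ)*y 0*y 1^4*y 2 - (440303845547975/253707378720768 : ℂ)*y 0*y 1^5 + (2086158651143933/108731733737472 : ℂ)*y 0^2*y 2*y 3^3 - (960852042341267/84569126240256 : ℂ)*y 0^2*y 2^3*y 3 + (689833175984011/36243911245824 : ℂ)*y 0^2*y 1*y 3^3 + (13754287678445023/380561068081152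 : ℂ)*y 0^2*y 1*y 2^2*y 3 + (27056188815551285/380561068081152 : ℂ)*y 0^2*y 1^2*y 2*y 3 + (1510159290484741/40059059798016 : ℂ)*y 0^2*y 1^3*y 3 - (9847300068401/977050238976 : ℂ)*y 0^3*y 2*y 3^2 + (3579988057149359/761122136162304 : ℂ)*y 0^3*y 2^3 + (25518066074492743/2283366408486912 : ℂ)*y 0^3*y 1*y 3^2 + (22097718500809829/1141683204243456 : ℂ)*y 0^3*y 1*y 2^2 + (206653284753521/380561068081152 : ℂ)*y 0^3*y 1^2*y 2 + (1335641083818925/326195201212416 : ℂ)*y 0^3*y 1^3 + (6170871541707349/1141683204243456 : ℂ)*y 0^4*y 2*y 3 + (8545407960759673/1141683204243456 : ℂ)*y 0^4*y 1*y 3 - (1561/864 : ℂ)*y 0^5*y 2 - y 0^5*y 1 + (555438991970675/570841602121728 : ℂ)*A*y 2*y 3^5 + (6824852315875871/761122136162304 : ℂ)*A*y 2^3*y 3^3 + (8028067100021629/761122136162304 : ℂ)*A*y 2^5*y 3 - (8313004132211/81548800303104 : ℂ)*A*y 1*y 3^5 - (22183471272612239/2283366408486912 : ℂ)*A*y 1*y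 2^2*y 3^3 - (64485259937971/10014764949504 : ℂ)*A*y 1*y 2^4*y 3 + (2533580600921897/285420801060864 : ℂ)*A*y 1^2*y 2*y 3^3 + (4659133821626461/190280534040576 : ℂ)*A*y 1^2*y 2^3*y 3 + (7114708790927825/326195201212416 : ℂ)*A*y 1^3*y 2^2*y 3 + (134663694825791/60088589697024 : ℂ)*A*y 1^4*y 2*y 3 + (8313004132211/81548800303104 : ℂ)*A*y 1^5*y 3 - (8351636979504619/2283366408486912 : ℂ)*A*y 0*y 2*y 3^4 + (31089389491757/20029529899008 : ℂ)*A*y 0*y 2^3*y 3^2 - (580660460231527/253707378720768 : ℂ)*A*y 0*y 2^5 + (1553982152014247/326195201212416 : ℂ)*A*y 0*y 1*y 3^4 - (63063546588913/36243911245824 : ℂ)*A*y 0*y 1*y 2^2*y 3^2 + (620696782210621/126853689360384 : ℂ)*A*y 0*y 1*y 2^4 + (7195065144613369/380561068081152 : ℂ)*A*y 0*y 1^2*y 2*y 3^2 - (809410962120853/42284563120128 : ℂ)*A*y 0*y 1^2*y 2^3 - (2883426550401913/326195201212416 : ℂ)*A*y 0*y 1^3*y 3^2 - (24880724971136597/2283366408486912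 : ℂ)*A*y 0*y 1^3*y 2^2 - (2620957861643501/190280534040576 : ℂ)*A*y 0*y 1^4*y 2 - (613383545012113/142710400530432 : ℂ)*A*y 0*y 1^5 - (5742875297967977/761122136162304 : ℂ)*A*y 0^2*y 2*y 3^3 - (3732213538951889/761122136162304 : ℂ)*A*y 0^2*y 2^3*y 3 + (1517061607556927/761122136162304 : ℂ)*A*y 0^2*y 1*y 3^3 - (2043480726773179/95140267020288 : ℂ)*A*y 0^2*y 1*y 2^2*y 3 + (389733265039129/63426844680192 : ℂ)*A*y 0^2*y 1^2*y 2*y 3 + (247916992016717/761122136162304 : ℂ)*A*y 0^2*y 1^3*y 3 - (292135497535261/63426844680192 : ℂ)*A*y 0^3*y 2*y 3^2 - (103/108 : ℂ)*A*y 0^3*y 2^3 + (158229424789553/142710400530432 : ℂ)*A*y 0^3*y 1*y 3^2 - (2101852842171991/142710400530432 : ℂ)*A*y 0^3*y 1*y 2^2 - (235405059973919/31713422340096 : ℂ)*A*y 0^3*y 1^2*y 2 - (20626482249151/3612921532416 : ℂ)*A*y 0^4*y 2*y 3 + (156098475033299/285420801060864 : ℂ)*A*y 0^4*y 1*y 3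 - (2/3 : ℂ)*A*y 0^5*y 2) * h0 +
      ((46074592384813/47570133510144 : ℂ)*y 3^6 - (4577766870524429/761122136162304 : ℂ)*y 2^2*y 3^4 - (146933708714449/28189708746752 : ℂ)*y 2^4*y 3^2 + (43/24 : ℂ)*y 2^6 + (1485327879034145/36243911245824 : ℂ)*y 1*y 2*y 3^4 + (684530113079341/10014764949504 : ℂ)*y 1*y 2^3*y 3^2 + (28145806007/39164461056 : ℂ)*y 1*y 2^5 - (58826310230105/2013550624768 : ℂ)*y 1^2*y 3^4 + (512952784450801/253707378720768 : ℂ)*y 1^2*y 2^2*y 3^2 - (2580221026700033/36243911245824 : ℂ)*y 1^2*y 2^4 - (14194883356316305/253707378720768 : ℂ)*y 1^3*y 2*y 3^2 - (18163215475019897/253707378720768 : ℂ)*y 1^3*y 2^3 - (13229076100671859/2283366408486912 : ℂ)*y 1^4*y 3^2 - (244478228597153/4459700016576 : ℂ)*y 1^4*y 2^2 - (16924224985213877/761122136162304 : ℂ)*y 1^5*y 2 + (1553675652345833/2283366408486912 : ℂ)*y 1^6 + (54993992417965/47570133510144 : ℂ)*y 0*y 3^5 + (34144623997951/6676509966336 :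 ℂ)*y 0*y 2^2*y 3^3 - (365/72 : ℂ)*y 0*y 2^4*y 3 - (709377716172097/27182933434368 : ℂ)*y 0*y 1*y 2*y 3^3 - (17396182418269091/126853689360384 : ℂ)*y 0*y 1*y 2^3*y 3 - (16609732374615133/380561068081152 : ℂ)*y 0*y 1^2*y 3^3 - (49789161096854357/380561068081152 : ℂ)*y 0*y 1^2*y 2^2*y 3 - (37712527936546039/285420801060864 : ℂ)*y 0*y 1^3*y 2*y 3 - (2375268931315337/81548800303104 : ℂ)*y 0*y 1^4*y 3 + (96617859239341/47570133510144 : ℂ)*y 0^2*y 3^4 - (501940856931467/15856711170048 : ℂ)*y 0^2*y 2^2*y 3^2 - 9*y 0^2*y 2^4 + (7829480818405283/761122136162304 : ℂ)*y 0^2*y 1*y 2*y 3^2 - (8162577585293231/253707378720768 : ℂ)*y 0^2*y 1*y 2^3 - (27514120063292669/761122136162304 : ℂ)*y 0^2*y 1^2*y 3^2 - (25500304439382629/380561068081152 : ℂ)*y 0^2*y 1^2*y 2^2 - (3636463737336481/54365866868736 : ℂ)*y 0^2*y 1^3*y 2 - (1226909350081453/108731733737472 : ℂ)*y 0^2*y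 1^4 - (34182059007277/15856711170048 : ℂ)*y 0^3*y 3^3 - 27*y 0^3*y 2^2*y 3 - (5950198977924181/380561068081152 : ℂ)*y 0^3*y 1*y 2*y 3 - (6672226260360085/380561068081152 : ℂ)*y 0^3*y 1^2*y 3 - (167/288 : ℂ)*y 0^4*y 1*y 2 - 3*y 0^5*y 3 + y 0^6 + (46074592384813/95140267020288 : ℂ)*A*y 3^6 - (727081249132579/761122136162304 : ℂ)*A*y 2^2*y 3^4 - (5430551204981009/761122136162304 : ℂ)*A*y 2^4*y 3^2 + (43/48 : ℂ)*A*y 2^6 - (40475369361055/31713422340096 : ℂ)*A*y 1*y 2*y 3^4 + (3526755002282311/380561068081152 : ℂ)*A*y 1*y 2^3*y 3^2 - (28023389979163/28189708746752 : ℂ)*A*y 1*y 2^5 - (3222012900645149/761122136162304 : ℂ)*A*y 1^2*y 3^4 - (2071750667606171/63426844680192 : ℂ)*A*y 1^2*y 2^2*y 3^2 - (4616436504885113/761122136162304 : ℂ)*A*y 1^2*y 2^4 - (5739077583811297/1141683204243456 : ℂ)*A*y 1^3*y 2*y 3^2 - (1322655723696365/380561068081152 : ℂ)*A*y 1^3*y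 2^3 + (129119694971009/84569126240256 : ℂ)*A*y 1^4*y 3^2 + (243011738982979/108731733737472 : ℂ)*A*y 1^4*y 2^2 + (11369138909841137/2283366408486912 : ℂ)*A*y 1^5*y 2 + (10336317732403/7047427186688 : ℂ)*A*y 1^6 - (41614892368237/47570133510144 : ℂ)*A*y 0*y 3^5 + (164925092172709/31713422340096 : ℂ)*A*y 0*y 2^4*y 3 + (1/4 : ℂ)*A*y 0^2*y 3^4 - (1/48 : ℂ)*A*y 0^2*y 2^4 - (95131292567149/47570133510144 : ℂ)*A*y 0^3*y 3^3 - (34182059007277/95140267020288 : ℂ)*A*y 0^4*y 3^2 - A*y 0^4*y 2^2 - A*y 0^5*y 3) * h1 +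
      ((1770546903152893/190280534040576 : ℂ)*y 2^2*y 3^4 + (3746864979315637/380561068081152 : ℂ)*y 2^4*y 3^2 - (42195519643/14686672896 : ℂ)*y 2^6 + (356355260396851/23785066755072 : ℂ)*y 1*y 2*y 3^4 - (7476467205259663/126853689360384 : ℂ)*y 1*y 2^3*y 3^2 + (5496927479029475/190280534040576 : ℂ)*y 1*y 2^5 - (8313004132211/9060977811456 : ℂ)*y 1^2*y 3^4 + (742243201114291/10014764949504 : ℂ)*y 1^2*y 2^2*y 3^2 + (5134658516317049/380561068081152 : ℂ)*y 1^2*y 2^4 - (4951379361467171/285420801060864 : ℂ)*y 1^3*y 2*y 3^2 + (7593480720068627/380561068081152 : ℂ)*y 1^3*y 2^3 + (8313004132211/40774400151552 : ℂ)*y 1^4*y 3^2 - (1144273376442961/1141683204243456 : ℂ)*y 1^4*y 2^2 + (127227998317085/163097600606208 : ℂ)*y 1^5*y 2 - (8313004132211/81548800303104 : ℂ)*y 1^6 + (46074592384813/10571140780032 : ℂ)*y 0*y 3^5 - (3249611795580785/190280534040576 : ℂ)*y 0*y 2^2*y 3^3 + (1291676795288627/42284563120128 : ℂ)*y 0*y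 2^4*y 3 + (20432319410189461/380561068081152 : ℂ)*y 0*y 1*y 2*y 3^3 + (16057788859733/488525119488 : ℂ)*y 0*y 1*y 2^3*y 3 - (568238310349583/380561068081152 : ℂ)*y 0*y 1^2*y 3^3 + (40907723964798491/380561068081152 : ℂ)*y 0*y 1^2*y 2^2*y 3 - (81386956263698921/1141683204243456 : ℂ)*y 0*y 1^3*y 2*y 3 - (1835858527426927/570841602121728 : ℂ)*y 0*y 1^4*y 3 + (52764142409677/7928355585024 : ℂ)*y 0^2*y 3^4 + (1458488647287815/31713422340096 : ℂ)*y 0^2*y 2^2*y 3^2 + (23573408477/1864974336 : ℂ)*y 0^2*y 2^4 + (4339241354908315/63426844680192 : ℂ)*y 0^2*y 1*y 2*y 3^2 + (3251058473405143/126853689360384 : ℂ)*y 0^2*y 1*y 2^3 - (355706605826519/95140267020288 : ℂ)*y 0^2*y 1^2*y 3^2 + (22180403863582537/190280534040576 : ℂ)*y 0^2*y 1^2*y 2^2 + (2153930550962347/47570133510144 : ℂ)*y 0^2*y 1^3*y 2 + (2174453601273571/190280534040576 : ℂ)*y 0^2*y 1^4 + (471196762819169/47570133510144 : ℂ)*y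 0^3*y 3^3 - (323250142780501/27182933434368 : ℂ)*y 0^3*y 2^2*y 3 + (1575848185614439/42284563120128 : ℂ)*y 0^3*y 1*y 2*y 3 - (3751227127575689/380561068081152 : ℂ)*y 0^3*y 1^2*y 3 + (159796942807501/23785066755072 : ℂ)*y 0^4*y 3^2 + (1705/432 : ℂ)*y 0^4*y 2^2 + (253023627940639/10571140780032 : ℂ)*y 0^4*y 1*y 2 + (319602860068141/95140267020288 : ℂ)*y 0^5*y 3 + (447269067783823/95140267020288 : ℂ)*A*y 2^2*y 3^4 + (637494061402129/95140267020288 : ℂ)*A*y 2^4*y 3^2 + (43/48 : ℂ)*A*y 2^6 - (60421309106785/95140267020288 : ℂ)*A*y 1*y 2*y 3^4 + (92013892242539/31713422340096 : ℂ)*A*y 1*y 2^3*y 3^2) * h2 +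
      (-(13077886729/3091931136 : ℂ)*y 2*y 3^5 - (2634095417029/117493383168 : ℂ)*y 2^3*y 3^3 + (29038708507/4895557632 : ℂ)*y 2^5*y 3 + (3913253999/4196192256 : ℂ)*y 1*y 3^5 + (483206647981/16784769024 : ℂ)*y 1*y 2^2*y 3^3 + (130045189751/6527410176 : ℂ)*y 1*y 2^4*y 3 - (235059584659/16784769024 : ℂ)*y 1^2*y 2*y 3^3 - (297860703367/39164461056 : ℂ)*y 1^2*y 2^3*y 3 + (403231049107/117493383168 : ℂ)*y 1^3*y 3^3 + (16129683197/6183862272 : ℂ)*y 1^3*y 2^2*y 3 + (331032061135/16784769024 : ℂ)*y 1^4*y 2*y 3 + (1041431825/883408896 : ℂ)*y 1^5*y 3 + (8023121453/4895557632 : ℂ)*y 0*y 2*y 3^4 + (53537291141/5594923008 : ℂ)*y 0*y 2^3*y 3^2 + (129/16 : ℂ)*y 0*y 2^5 - (6099096515/7343336448 : ℂ)*y 0*y 1*y 3^4 - (7823704851/621658112 : ℂ)*y 0*y 1*y 2^2*y 3^2 + (10034983203/621658112 : ℂ)*y 0*y 1*y 2^4 - (258467444497/39164461056 : ℂ)*y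 0*y 1^2*y 2*y 3^2 - (43747656119/5594923008 : ℂ)*y 0*y 1^2*y 2^3 + (53919879635/4351606784 : ℂ)*y 0*y 1^3*y 3^2 - (137648735959/16784769024 : ℂ)*y 0*y 1^3*y 2^2 - (98945436809/16784769024 : ℂ)*y 0*y 1^4*y 2 - (95/48 : ℂ)*y 0^3*y 2^3) * h3 -
      (-(831886546279553/570841602121728 : ℂ)*y 2^2*y 3^7 - (1524442766685823/190280534040576 : ℂ)*y 2^4*y 3^5 - (649378973760155/190280534040576 : ℂ)*y 2^6*y 3^3 - (43/48 : ℂ)*y 2^8*y 3 + (291631282378477/142710400530432 : ℂ)*y 1*y 2*y 3^7 + (10981304016849767/1141683204243456 : ℂ)*y 1*y 2^3*y 3^5 - (10886351856481/991044448128 : ℂ)*y 1*y 2^5*y 3^3 + (4392349314729515/380561068081152 : ℂ)*y 1*y 2^7*y 3 - (8313004132211/81548800303104 : ℂ)*y 1^2*y 3^7 - (11404195560479/1132622226432 : ℂ)*y 1^2*y 2^2*y 3^5 + (23316390800787911/1141683204243456 : ℂ)*y 1^2*y 2^4*y 3^3 + (216006230345569/23785066755072 : ℂ)*y 1^2*y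 2^6*y 3 - (373154065380233/1141683204243456 : ℂ)*y 1^3*y 2*y 3^5 - (3964721087524163/71355200265216 : ℂ)*y 1^3*y 2^3*y 3^3 + (99279082900591/10571140780032 : ℂ)*y 1^3*y 2^5*y 3 + (19255921920513731/1141683204243456 : ℂ)*y 1^4*y 2^2*y 3^3 + (1513168789160953/40774400151552 : ℂ)*y 1^4*y 2^4*y 3 + (2964229954028159/570841602121728 : ℂ)*y 1^5*y 2*y 3^3 + (26878768033659407/1141683204243456 : ℂ)*y 1^5*y 2^3*y 3 + (8313004132211/81548800303104 : ℂ)*y 1^6*y 3^3 + (6184823848366417/570841602121728 : ℂ)*y 1^6*y 2^2*y 3 + (1732674501574763/570841602121728 : ℂ)*y 1^7*y 2*y 3 + (46074592384813/95140267020288 : ℂ)*y 0*y 3^8 + (213053756569387/163097600606208 : ℂ)*y 0*y 2^2*y 3^6 + (302680721433589/190280534040576 : ℂ)*y 0*y 2^4*y 3^4 + (467186786867323/42284563120128 : ℂ)*y 0*y 2^6*y 3^2 + (43/48 : ℂ)*y 0*y 2^8 - (1541591062296301/190280534040576 : ℂ)*y 0*y 1*y 2*y 3^6 + (12237729572375537/1141683204243456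 : ℂ)*y 0*y 1*y 2^3*y 3^4 + (323368643501863/15856711170048 : ℂ)*y 0*y 1*y 2^5*y 3^2 + (1681452323/5594923008 : ℂ)*y 0*y 1*y 2^7 + (373154065380233/1141683204243456 : ℂ)*y 0*y 1^2*y 3^6 - (16336261285340525/285420801060864 : ℂ)*y 0*y 1^2*y 2^2*y 3^4 + (4971018276003469/95140267020288 : ℂ)*y 0*y 1^2*y 2^4*y 3^2 - (534989452127/117493383168 : ℂ)*y 0*y 1^2*y 2^6 + (13751532901547893/380561068081152 : ℂ)*y 0*y 1^3*y 2*y 3^4 + (22413324103091/732787679232 : ℂ)*y 0*y 1^3*y 2^3*y 3^2 - (2840425135259323/95140267020288 : ℂ)*y 0*y 1^3*y 2^5 - (219707290639423/30044294848512 : ℂ)*y 0*y 1^4*y 3^4 + (8930764729344037/163097600606208 : ℂ)*y 0*y 1^4*y 2^2*y 3^2 - (2479923096605515/71355200265216 : ℂ)*y 0*y 1^4*y 2^4 - (1597471499487755/285420801060864 : ℂ)*y 0*y 1^5*y 2*y 3^2 - (1930921520207353/126853689360384 : ℂ)*y 0*y 1^5*y 2^3 - (26314217296015/10014764949504 : ℂ)*y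 0*y 1^6*y 3^2 - (93693742561327/14094854373376 : ℂ)*y 0*y 1^6*y 2^2 - (389525353699583/285420801060864 : ℂ)*y 0*y 1^7*y 2 - (37155192351661/95140267020288 : ℂ)*y 0^2*y 3^7 + (39696398649461/13922965905408 : ℂ)*y 0^2*y 2^2*y 3^5 + (2430652659676615/190280534040576 : ℂ)*y 0^2*y 2^4*y 3^3 + (4542292895/1864974336 : ℂ)*y 0^2*y 2^6*y 3 - (5986254755762647/570841602121728 : ℂ)*y 0^2*y 1*y 2*y 3^5 + (1132051788592165/54365866868736 : ℂ)*y 0^2*y 1*y 2^3*y 3^3 + (920030569837367/95140267020288 : ℂ)*y 0^2*y 1*y 2^5*y 3 + (2080112031116849/285420801060864 : ℂ)*y 0^2*y 1^2*y 3^5 - (2997484384327619/95140267020288 : ℂ)*y 0^2*y 1^2*y 2^2*y 3^3 - (1104450693043945/18121955622912 : ℂ)*y 0^2*y 1^2*y 2^4*y 3 + (26166243125070163/1141683204243456 : ℂ)*y 0^2*y 1^3*y 2*y 3^3 - (549167402727595/6961482952704 : ℂ)*y 0^2*y 1^3*y 2^3*y 3 - (9034497241339847/570841602121728 : ℂ)*y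 0^2*y 1^4*y 3^3 - (610441076221157/15022147424256 : ℂ)*y 0^2*y 1^4*y 2^2*y 3 - (3217213643729/104320468224 : ℂ)*y 0^2*y 1^5*y 2*y 3 - (4069826623772261/570841602121728 : ℂ)*y 0^2*y 1^6*y 3 - (29722358990701/47570133510144 : ℂ)*y 0^3*y 3^6 - (1044623901732977/126853689360384 : ℂ)*y 0^3*y 2^2*y 3^4 - (199728326907139/54365866868736 : ℂ)*y 0^3*y 2^4*y 3^2 - (1/48 : ℂ)*y 0^3*y 2^6 - (181227936455357/8919400033152 : ℂ)*y 0^3*y 1*y 2*y 3^4 - (49772621778014029/1141683204243456 : ℂ)*y 0^3*y 1*y 2^3*y 3^2 - (215/216 : ℂ)*y 0^3*y 1*y 2^5 + (5817020220987205/1141683204243456 : ℂ)*y 0^3*y 1^2*y 3^4 - (23672992018390385/570841602121728 : ℂ)*y 0^3*y 1^2*y 2^2*y 3^2 - (2237956279714903/142710400530432 : ℂ)*y 0^3*y 1^2*y 2^4 + (7565401756714135/1141683204243456 : ℂ)*y 0^3*y 1^3*y 2*y 3^2 - (6322351224109253/285420801060864 : ℂ)*y 0^3*y 1^3*y 2^3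 + (247916992016717/380561068081152 : ℂ)*y 0^3*y 1^4*y 3^2 - (235405059973919/31713422340096 : ℂ)*y 0^3*y 1^4*y 2^2 - (83238759189613/47570133510144 : ℂ)*y 0^4*y 3^5 - (1467968958515483/285420801060864 : ℂ)*y 0^4*y 2^2*y 3^3 - (401/432 : ℂ)*y 0^4*y 2^4*y 3 - (5128560216224815/285420801060864 : ℂ)*y 0^4*y 1*y 2*y 3^3 - (1593165545523467/40774400151552 : ℂ)*y 0^4*y 1*y 2^3*y 3 + (112716596313073/40774400151552 : ℂ)*y 0^4*y 1^2*y 3^3 - (588254002952839/11892533377536 : ℂ)*y 0^4*y 1^2*y 2^2*y 3 - (4081192604497243/285420801060864 : ℂ)*y 0^4*y 1^3*y 2*y 3 - (74814881380525/31713422340096 : ℂ)*y 0^5*y 3^4 - (3171249838347113/285420801060864 : ℂ)*y 0^5*y 2^2*y 3^2 - y 0^5*y 2^4 - (279500123964659/20387200075776 : ℂ)*y 0^5*y 1*y 2*y 3^2 - (8/3 : ℂ)*y 0^5*y 1*y 2^3 + (156098475033299/142710400530432 : ℂ)*y 0^5*y 1^2*y 3^2 - (2/3 : ℂ)*y 0^5*y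 1^2*y 2^2 - (129322326027565/95140267020288 : ℂ)*y 0^6*y 3^3 - (10/3 : ℂ)*y 0^6*y 2^2*y 3 - (10/3 : ℂ)*y 0^6*y 1*y 2*y 3 - y 0^7*y 3^2) * hA
  have e1 : y 1 ^ 9 = 0 := by
    linear_combination (-(46635955087/1048135680 : ℂ)*y 3^6 - (8242940957077/33540341760 : ℂ)*y 2^2*y 3^4 - (11610648180133/25155256320 : ℂ)*y 2^4*y 3^2 + (215/64 : ℂ)*y 2^6 - (289719799207/698757120 : ℂ)*y 1*y 2*y 3^4 + (2443672567787/6708068352 : ℂ)*y 1*y 2^3*y 3^2 + (1883/384 : ℂ)*y 1*y 2^5 + (94637852743/209627136 : ℂ)*y 1^2*y 3^4 + (15795664707493/12577628160 : ℂ)*y 1^2*y 2^2*y 3^2 + (2219/384 : ℂ)*y 1^2*y 2^4 - (197580856913/419254272 : ℂ)*y 1^3*y 2*y 3^2 - (3061/384 : ℂ)*y 1^3*y 2^3 - (521/128 : ℂ)*y 1^4*y 2^2 - 3*y 1^5*y 2 + y 1^6 - (305982152591/2096271360 : ℂ)*y 0*y 3^5 + (1549081039507/3354034176 : ℂ)*y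 0*y 2^2*y 3^3 + (1526820917107/8385085440 : ℂ)*y 0*y 2^4*y 3 + (23510018335619/16770170880 : ℂ)*y 0*y 1*y 2*y 3^3 + (1295717363281/5031051264 : ℂ)*y 0*y 1*y 2^3*y 3 + (580696295701/1972961280 : ℂ)*y 0*y 1^2*y 3^3 + (8470322595947/50310512640 : ℂ)*y 0*y 1^2*y 2^2*y 3 - (9298961008457/5918883840 : ℂ)*y 0*y 1^3*y 2*y 3 + (3977678756359/6288814080 : ℂ)*y 0*y 1^4*y 3 + (4022233596823/11180113920 : ℂ)*y 0^2*y 3^4 + (156184673201/786101760 : ℂ)*y 0^2*y 2^2*y 3^2 - (11019908723/465838080 : ℂ)*y 0^2*y 2^4 - (146355087193/657653760 : ℂ)*y 0^2*y 1*y 2*y 3^2 + (3878795269/58229760 : ℂ)*y 0^2*y 1*y 2^3 - (10874942639971/50310512640 : ℂ)*y 0^2*y 1^2*y 3^2 + (1224951882827/698757120 : ℂ)*y 0^2*y 1^2*y 2^2 + (1588732694279/2096271360 : ℂ)*y 0^2*y 1^3*y 2 + (381208798081/838508544 : ℂ)*y 0^2*y 1^4 + (931858730839/100621025280 : ℂ)*y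 0^3*y 3^3 + (439217094761/2358305280 : ℂ)*y 0^3*y 2^2*y 3 + (133119777567133/100621025280 : ℂ)*y 0^3*y 1*y 2*y 3 + (38093455572763/75465768960 : ℂ)*y 0^3*y 1^2*y 3 + (11495011965533/50310512640 : ℂ)*y 0^4*y 3^2 + (11377541293/2096271360 : ℂ)*y 0^4*y 2^2 + (307174705031/838508544 : ℂ)*y 0^4*y 1*y 2 + (1138413245/9248256 : ℂ)*y 0^4*y 1^2 + (3336415727593/25155256320 : ℂ)*y 0^5*y 3 + (11377541293/4192542720 : ℂ)*y 0^6 - (94646587207/2096271360 : ℂ)*A*y 3^6 - (4221858701191/33540341760 : ℂ)*A*y 2^2*y 3^4 - (1499945812603/25155256320 : ℂ)*A*y 2^4*y 3^2 + (215/128 : ℂ)*A*y 2^6 + (5275491047267/16770170880 : ℂ)*A*y 1*y 2*y 3^4 + (48167760666127/100621025280 : ℂ)*A*y 1*y 2^3*y 3^2 - (1987/768 : ℂ)*A*y 1*y 2^5 + (133302211/2911488 : ℂ)*A*y 1^2*y 3^4 - (238261990181/3354034176 : ℂ)*A*y 1^2*y 2^2*y 3^2 - (425/384 : ℂ)*A*y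 1^2*y 2^4 - (15391694899/98262720 : ℂ)*A*y 1^3*y 2*y 3^2 - (281/64 : ℂ)*A*y 1^3*y 2^3 + (94428225607/2096271360 : ℂ)*A*y 1^4*y 3^2 - (559/192 : ℂ)*A*y 1^4*y 2^2 - (1289/768 : ℂ)*A*y 1^5*y 2 + (4694278938599/33540341760 : ℂ)*A*y 0*y 3^5 + (14215750243679/100621025280 : ℂ)*A*y 0*y 2^2*y 3^3 + (1553072771009/6288814080 : ℂ)*A*y 0*y 2^4*y 3 - (627125529839/33540341760 : ℂ)*A*y 0*y 1*y 2*y 3^3 + (15696614465/2236022784 : ℂ)*A*y 0*y 1*y 2^3*y 3 - (100465508501/739860480 : ℂ)*A*y 0*y 1^2*y 3^3 - (1648457013187/16770170880 : ℂ)*A*y 0*y 1^2*y 2^2*y 3 - (133996284077/5031051264 : ℂ)*A*y 0*y 1^3*y 2*y 3 + (413162713873/3144407040 : ℂ)*A*y 0*y 1^4*y 3 + (346399533449/33540341760 : ℂ)*A*y 0^2*y 3^4 + (5681696154647/50310512640 : ℂ)*A*y 0^2*y 2^2*y 3^2 - (215/384 : ℂ)*A*y 0^2*y 2^4 + (22602914109749/100621025280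 : ℂ)*A*y 0^2*y 1*y 2*y 3^2 + (1623156723229/12577628160 : ℂ)*A*y 0^2*y 1*y 2^3 + (1091702509801/6288814080 : ℂ)*A*y 0^2*y 1^2*y 3^2 + (24145092749/628881408 : ℂ)*A*y 0^2*y 1^2*y 2^2 - (48478441363/2515525632 : ℂ)*A*y 0^2*y 1^3*y 2 + (8493104543/232919040 : ℂ)*A*y 0^2*y 1^4 + (4363860992377/50310512640 : ℂ)*A*y 0^3*y 3^3 - (1713453874421/37732884480 : ℂ)*A*y 0^3*y 2^2*y 3 + (1433719876801/25155256320 : ℂ)*A*y 0^3*y 1*y 2*y 3 + (489243631247/7546576896 : ℂ)*A*y 0^3*y 1^2*y 3 + (1074213438221/25155256320 : ℂ)*A*y 0^4*y 3^2 + (11377541293/2096271360 : ℂ)*A*y 0^4*y 2^2 + (79642789051/12577628160 : ℂ)*A*y 0^4*y 1*y 2 + (11377541293/12577628160 : ℂ)*A*y 0^5*y 3) * h0 +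
      ((2191348424501/33540341760 : ℂ)*y 2*y 3^5 + (449250361541/1479720960 : ℂ)*y 2^3*y 3^3 - (14898622093/349378560 : ℂ)*y 2^5*y 3 - (43645884119/698757120 : ℂ)*y 1*y 3^5 - (1305615475537/11180113920 : ℂ)*y 1*y 2^2*y 3^3 - (979550161369/8385085440 : ℂ)*y 1*y 2^4*y 3 - (115043937308819/100621025280 : ℂ)*y 1^2*y 2*y 3^3 - (1471965931151/1257762816 : ℂ)*y 1^2*y 2^3*y 3 + (7552403131807/20124205056 : ℂ)*y 1^3*y 3^3 + (81278584675679/301863075840 : ℂ)*y 1^3*y 2^2*y 3 + (2400589666439/20124205056 : ℂ)*y 1^4*y 2*y 3 - (393336396017/2358305280 : ℂ)*y 1^5*y 3 - (3145852448573/16770170880 : ℂ)*y 0*y 2*y 3^4 - (76771988273/209627136 : ℂ)*y 0*y 2^3*y 3^2 - (12323575237573/16770170880 : ℂ)*y 0*y 1*y 3^4 - (1490747276347/1257762816 : ℂ)*y 0*y 1*y 2^2*y 3^2 + (11162961751/93167616 : ℂ)*y 0*y 1*y 2^4 + (4455076607413/4192542720 : ℂ)*y 0*y 1^2*y 2*y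 3^2 - (63099974801/1397514240 : ℂ)*y 0*y 1^2*y 2^3 + (1434863008159/3354034176 : ℂ)*y 0*y 1^3*y 3^2 - (610017941141/1048135680 : ℂ)*y 0*y 1^3*y 2^2 - (324852082669/1397514240 : ℂ)*y 0*y 1^4*y 2 - (2040398755061/12577628160 : ℂ)*y 0*y 1^5 + (2904069158459/8385085440 : ℂ)*y 0^2*y 2*y 3^3 + (79642789051/698757120 : ℂ)*y 0^2*y 2^3*y 3 + (2964847650181/11180113920 : ℂ)*y 0^2*y 1*y 3^3 - (2387360170081/6288814080 : ℂ)*y 0^2*y 1*y 2^2*y 3 - (6206924813537/33540341760 : ℂ)*y 0^2*y 1^2*y 2*y 3 - (4365430848833/25155256320 : ℂ)*y 0^2*y 1^3*y 3 + (11377541293/1397514240 : ℂ)*y 0^3*y 2*y 3^2 - (1652903668621/5590056960 : ℂ)*y 0^3*y 1*y 3^2 - (11377541293/698757120 : ℂ)*y 0^3*y 1*y 2^2 - (60676280671/58229760 : ℂ)*y 0^3*y 1^2*y 2 - (60717570119/174689280 : ℂ)*y 0^3*y 1^3 - (653630095967/1677017088 : ℂ)*y 0^4*y 1*y 3 - (11377541293/1397514240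 : ℂ)*y 0^5*y 1 - (250959194441/33540341760 : ℂ)*A*y 2*y 3^5 + (1594514674471/25155256320 : ℂ)*A*y 2^3*y 3^3 - (14898622093/698757120 : ℂ)*A*y 2^5*y 3 - (229042053601/2236022784 : ℂ)*A*y 1*y 3^5 - (7907644367501/25155256320 : ℂ)*A*y 1*y 2^2*y 3^3 - (276600757297/1257762816 : ℂ)*A*y 1*y 2^4*y 3 + (424571288711/5590056960 : ℂ)*A*y 1^2*y 2*y 3^3 - (2137167213553/100621025280 : ℂ)*A*y 1^2*y 2^3*y 3 + (534044150693/4192542720 : ℂ)*A*y 1^3*y 3^3 + (36652062880369/301863075840 : ℂ)*A*y 1^3*y 2^2*y 3 - (110310925885/5031051264 : ℂ)*A*y 1^4*y 2*y 3 - (36146139589/1109790720 : ℂ)*A*y 1^5*y 3 + (9223996303/310558720 : ℂ)*A*y 0*y 2*y 3^4 - (3340399491499/6288814080 : ℂ)*A*y 0*y 2^3*y 3^2 + (215/128 : ℂ)*A*y 0*y 1*y 2^4 - (90807719845/1257762816 : ℂ)*A*y 0*y 1^2*y 2^3 - (1896747653/123310080 : ℂ)*A*y 0*y 1^5) * h1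 +
      ((44886054433/174689280 : ℂ)*y 2*y 3^5 - (55706078303/349378560 : ℂ)*y 2^3*y 3^3 + (19234948433/698757120 : ℂ)*y 2^5*y 3 - (94646587207/232919040 : ℂ)*y 1*y 3^5 - (66361764839/116459520 : ℂ)*y 1*y 2^2*y 3^3 + (3424178899/8734464 : ℂ)*y 1*y 2^4*y 3 - (118022513327/155279360 : ℂ)*y 1^2*y 2*y 3^3 + (12833701/2911488 : ℂ)*y 1^2*y 2^3*y 3 + (46439429647/1048135680 : ℂ)*y 1^3*y 3^3 + (53714786231/77639680 : ℂ)*y 1^3*y 2^2*y 3 + (1102697193/4852480 : ℂ)*y 1^4*y 2*y 3 - (96524496967/2096271360 : ℂ)*y 1^5*y 3 - (679323881669/698757120 : ℂ)*y 0*y 2*y 3^4 + (38083392873/77639680 : ℂ)*y 0*y 2^3*y 3^2 - (830330713/14557440 : ℂ)*y 0*y 2^5 - (283637867921/279502848 : ℂ)*y 0*y 1*y 3^4 - (21005560997/77639680 : ℂ)*y 0*y 1*y 2^2*y 3^2 - (24212315231/465838080 : ℂ)*y 0*y 1*y 2^4 + (110664114467/139751424 : ℂ)*y 0*y 1^2*y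 2*y 3^2 - (370867553407/698757120 : ℂ)*y 0*y 1^2*y 2^3 - (90040508419/131016960 : ℂ)*y 0*y 1^3*y 3^2 - (75000505669/246620160 : ℂ)*y 0*y 1^3*y 2^2 - (28829032211/209627136 : ℂ)*y 0*y 1^4*y 2 + (786421229/87344640 : ℂ)*y 0*y 1^5 - (147945144221/698757120 : ℂ)*y 0^2*y 2*y 3^3 - (203337572663/1397514240 : ℂ)*y 0^2*y 2^3*y 3 - (68195638231/116459520 : ℂ)*y 0^2*y 1*y 3^3 - (1415947744621/698757120 : ℂ)*y 0^2*y 1*y 2^2*y 3 - (63537529769/698757120 : ℂ)*y 0^2*y 1^2*y 2*y 3 - (1206118304131/1048135680 : ℂ)*y 0^2*y 1^3*y 3 - (445577479931/1048135680 : ℂ)*y 0^3*y 2*y 3^2 + (11377541293/1048135680 : ℂ)*y 0^3*y 2^3 - (346534330259/1397514240 : ℂ)*y 0^3*y 1*y 3^2 + (134246643107/698757120 : ℂ)*y 0^3*y 1*y 2^2 + (340248375535/419254272 : ℂ)*y 0^3*y 1^2*y 2 - (2463363907/26203392 : ℂ)*y 0^3*y 1^3 - (55417303105/209627136 : ℂ)*y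 0^4*y 2*y 3 - (11377541293/2096271360 : ℂ)*y 0^5*y 2 - (62639499127/698757120 : ℂ)*A*y 2*y 3^5 - (4701007981/104813568 : ℂ)*A*y 2^3*y 3^3 - (13724928493/698757120 : ℂ)*A*y 2^5*y 3 - (44454289/970496 : ℂ)*A*y 1*y 3^5) * h2 +
      ((43622093/8220672 : ℂ)*y 3^6 + (57844015/4110336 : ℂ)*y 2^2*y 3^4 - (16205941/685056 : ℂ)*y 2^4*y 3^2 - (74477617/4110336 : ℂ)*y 1*y 2*y 3^4 - (5592523/456704 : ℂ)*y 1*y 2^3*y 3^2 + (1935/128 : ℂ)*y 1*y 2^5 - (9567353/8220672 : ℂ)*y 1^2*y 3^4 - (201977261/2740224 : ℂ)*y 1^2*y 2^2*y 3^2 + (6939/256 : ℂ)*y 1^2*y 2^4 + (16235575/1027584 : ℂ)*y 1^3*y 2*y 3^2 + 30*y 1^3*y 2^3 - (31283639/8220672 : ℂ)*y 1^4*y 3^2 + (7021/384 : ℂ)*y 1^4*y 2^2 + (2791/384 : ℂ)*y 1^5*y 2 + (521/768 : ℂ)*y 1^6 + (2809283/2055168 : ℂ)*y 0*y 3^5 -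 (630281/42816 : ℂ)*y 0*y 2^2*y 3^3 + (8635959/913408 : ℂ)*y 0*y 2^4*y 3 - (80333279/2055168 : ℂ)*y 0*y 1*y 2*y 3^3 + (3435125/1370112 : ℂ)*y 0*y 1*y 2^3*y 3 + (78298549/4110336 : ℂ)*y 0*y 1^2*y 3^3 + (40151221/685056 : ℂ)*y 0*y 1^2*y 2^2*y 3 + (143458717/4110336 : ℂ)*y 0*y 1^3*y 2*y 3 + (38715739/8220672 : ℂ)*y 0*y 1^4*y 3 + (16840129/8220672 : ℂ)*y 0^2*y 3^4 + (60641077/2740224 : ℂ)*y 0^2*y 2^2*y 3^2) * h3 -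
      ((94646587207/2096271360 : ℂ)*y 2*y 3^8 + (93183706159/698757120 : ℂ)*y 2^3*y 3^6 - (7880738489/2096271360 : ℂ)*y 2^5*y 3^4 + (13724928493/698757120 : ℂ)*y 2^7*y 3^2 - (94646587207/2096271360 : ℂ)*y 1*y 3^8 - (57344389529/262033920 : ℂ)*y 1*y 2^2*y 3^6 - (671024491541/5031051264 : ℂ)*y 1*y 2^4*y 3^4 + (4054899038617/25155256320 : ℂ)*y 1*y 2^6*y 3^2 + (215/128 : ℂ)*y 1*y 2^8 + (28988254919/1397514240 : ℂ)*y 1^2*y 2*y 3^6 - (2061880087/186335232 : ℂ)*y 1^2*y 2^3*y 3^4 - (173027710397/8385085440 : ℂ)*y 1^2*y 2^5*y 3^2 - (697/768 : ℂ)*y 1^2*y 2^7 - (1/48 : ℂ)*y 1^3*y 3^6 + (369848541749/786101760 : ℂ)*y 1^3*y 2^2*y 3^4 + (18643977759941/75465768960 : ℂ)*y 1^3*y 2^4*y 3^2 - (2837/768 : ℂ)*y 1^3*y 2^6 + (310856038741/3144407040 : ℂ)*y 1^4*y 2*y 3^4 + (537470483407/15093153792 : ℂ)*y 1^4*y 2^3*y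 3^2 - (2111/384 : ℂ)*y 1^4*y 2^5 + (94428225607/2096271360 : ℂ)*y 1^5*y 3^4 - (4682925320459/37732884480 : ℂ)*y 1^5*y 2^2*y 3^2 - (701/96 : ℂ)*y 1^5*y 2^4 - (410779877083/18866442240 : ℂ)*y 1^6*y 2*y 3^2 - (1175/256 : ℂ)*y 1^6*y 2^3 - (1289/768 : ℂ)*y 1^7*y 2^2 - (8623668343/58229760 : ℂ)*y 0*y 2*y 3^7 - (8099332119169/25155256320 : ℂ)*y 0*y 2^3*y 3^5 + (1140335392325/5031051264 : ℂ)*y 0*y 2^5*y 3^3 - (12551234893/698757120 : ℂ)*y 0*y 2^7*y 3 - (1947520235/279502848 : ℂ)*y 0*y 1*y 3^7 + (117115303853/931676160 : ℂ)*y 0*y 1*y 2^2*y 3^5 - (2852226495763/8385085440 : ℂ)*y 0*y 1*y 2^4*y 3^3 - (5099069737/87344640 : ℂ)*y 0*y 1*y 2^6*y 3 + (1679371997633/2515525632 : ℂ)*y 0*y 1^2*y 2*y 3^5 + (1067556467177/2515525632 : ℂ)*y 0*y 1^2*y 2^3*y 3^3 - (3988728745909/25155256320 : ℂ)*y 0*y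 1^2*y 2^5*y 3 + (234911162581/6288814080 : ℂ)*y 0*y 1^3*y 3^5 - (1324426518917/4716610560 : ℂ)*y 0*y 1^3*y 2^2*y 3^3 - (2531537542093/15093153792 : ℂ)*y 0*y 1^3*y 2^4*y 3 - (18615639623/65508480 : ℂ)*y 0*y 1^4*y 2*y 3^3 + (6141252063893/75465768960 : ℂ)*y 0*y 1^4*y 2^3*y 3 + (3564199971151/18866442240 : ℂ)*y 0*y 1^5*y 3^3 + (2606752990831/75465768960 : ℂ)*y 0*y 1^5*y 2^2*y 3 + (303136216177/9433221120 : ℂ)*y 0*y 1^6*y 2*y 3 + (8829029677/43672320 : ℂ)*y 0^2*y 2*y 3^6 - (1313525743651/4192542720 : ℂ)*y 0^2*y 2^3*y 3^4 - (638359247/8220672 : ℂ)*y 0^2*y 2^5*y 3^2 + (198457765783/1397514240 : ℂ)*y 0^2*y 1*y 3^6 - (2796250939361/25155256320 : ℂ)*y 0^2*y 1*y 2^2*y 3^4 - (4963687951783/6288814080 : ℂ)*y 0^2*y 1*y 2^4*y 3^2 + (215/192 : ℂ)*y 0^2*y 1*y 2^6 - (1439351311769/8385085440 : ℂ)*y 0^2*y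 1^2*y 2*y 3^4 + (159560121953/1048135680 : ℂ)*y 0^2*y 1^2*y 2^3*y 3^2 + (83365592531/1397514240 : ℂ)*y 0^2*y 1^2*y 2^5 + (41078909183/1397514240 : ℂ)*y 0^2*y 1^3*y 3^4 + (24711394149793/75465768960 : ℂ)*y 0^2*y 1^3*y 2^2*y 3^2 + (32211575701/1397514240 : ℂ)*y 0^2*y 1^3*y 2^4 + (2561285428901/8385085440 : ℂ)*y 0^2*y 1^4*y 2*y 3^2 + (48101929633/2515525632 : ℂ)*y 0^2*y 1^4*y 2^3 + (4741207270537/18866442240 : ℂ)*y 0^2*y 1^5*y 3^2 + (22767177901/12577628160 : ℂ)*y 0^2*y 1^5*y 2^2 + (2389704137/419254272 : ℂ)*y 0^2*y 1^6*y 2 - (57199218467/1572203520 : ℂ)*y 0^3*y 2*y 3^5 - (3922559537041/15093153792 : ℂ)*y 0^3*y 2^3*y 3^3 - (215/192 : ℂ)*y 0^3*y 2^5*y 3 + (1350764898181/12577628160 : ℂ)*y 0^3*y 1*y 3^5 + (9953436747577/15093153792 : ℂ)*y 0^3*y 1*y 2^2*y 3^3 + (8046612949753/37732884480 : ℂ)*y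 0^3*y 1*y 2^4*y 3 + (33029873103173/37732884480 : ℂ)*y 0^3*y 1^2*y 2*y 3^3 + (20698491629369/75465768960 : ℂ)*y 0^3*y 1^2*y 2^3*y 3 + (914508721991/2219581440 : ℂ)*y 0^3*y 1^3*y 3^3 + (12079711720853/75465768960 : ℂ)*y 0^3*y 1^3*y 2^2*y 3 + (3743630787277/37732884480 : ℂ)*y 0^3*y 1^4*y 2*y 3 + (120631171673/2096271360 : ℂ)*y 0^3*y 1^5*y 3 + (822411888539/6288814080 : ℂ)*y 0^4*y 2*y 3^4 - (907925873029/9433221120 : ℂ)*y 0^4*y 2^3*y 3^2 + (906345738433/4192542720 : ℂ)*y 0^4*y 1*y 3^4 + (4902878830027/75465768960 : ℂ)*y 0^4*y 1*y 2^2*y 3^2 + (11377541293/2096271360 : ℂ)*y 0^4*y 1*y 2^4 + (4417537786943/15093153792 : ℂ)*y 0^4*y 1^2*y 2*y 3^2 + (147908036809/12577628160 : ℂ)*y 0^4*y 1^2*y 2^3 + (489243631247/3773288448 : ℂ)*y 0^4*y 1^3*y 3^2 + (79642789051/12577628160 : ℂ)*y 0^4*y 1^3*y 2^2 + (33213621779/393050880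 : ℂ)*y 0^5*y 2*y 3^3 + (11377541293/1048135680 : ℂ)*y 0^5*y 2^3*y 3 + (60310609973/698757120 : ℂ)*y 0^5*y 1*y 3^3 + (11377541293/465838080 : ℂ)*y 0^5*y 1*y 2^2*y 3 + (11377541293/838508544 : ℂ)*y 0^5*y 1^2*y 2*y 3 + (11377541293/6288814080 : ℂ)*y 0^6*y 2*y 3^2 + (11377541293/6288814080 : ℂ)*y 0^6*y 1*y 3^2) * hA
  have e2 : y 2 ^ 9 = 0 := by
    linear_combination (-(8837984725/7546576896 : ℂ)*y 3^6 + (211588296169/241490460672 : ℂ)*y 2^2*y 3^4 + (29703627665/181117845504 : ℂ)*y 2^4*y 3^2 + (329/384 : ℂ)*y 2^6 - (234160210543/15093153792 : ℂ)*y 1*y 2*y 3^4 - (2904001922867/241490460672 : ℂ)*y 1*y 2^3*y 3^2 + (113/384 : ℂ)*y 1*y 2^5 + (92304875825/7546576896 : ℂ)*y 1^2*y 3^4 + (2949038863783/90558922752 : ℂ)*y 1^2*y 2^2*y 3^2 - (199/384 : ℂ)*y 1^2*y 2^4 - (110850954175/15093153792 : ℂ)*y 1^3*y 2*y 3^2 -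 (57/128 : ℂ)*y 1^3*y 2^3 - (3/16 : ℂ)*y 1^4*y 2^2 - (131812051255/15093153792 : ℂ)*y 0*y 3^5 - (547750253627/120745230336 : ℂ)*y 0*y 2^2*y 3^3 + (46577232721/60372615168 : ℂ)*y 0*y 2^4*y 3 + (1115422081403/40248410112 : ℂ)*y 0*y 1*y 2*y 3^3 - (1603456469737/181117845504 : ℂ)*y 0*y 1*y 2^3*y 3 + (123941654647/14205321216 : ℂ)*y 0*y 1^2*y 3^3 + (1811786690537/362235691008 : ℂ)*y 0*y 1^2*y 2^2*y 3 - (941843961683/42615963648 : ℂ)*y 0*y 1^3*y 2*y 3 + (499406217091/45279461376 : ℂ)*y 0*y 1^4*y 3 + (973944468007/241490460672 : ℂ)*y 0^2*y 3^4 - (66322550149/22639730688 : ℂ)*y 0^2*y 2^2*y 3^2 - (161273563/124223488 : ℂ)*y 0^2*y 2^4 + (7776260029/4735107072 : ℂ)*y 0^2*y 1*y 2*y 3^2 - (28967701/209627136 : ℂ)*y 0^2*y 1*y 2^3 - (956386660657/362235691008 : ℂ)*y 0^2*y 1^2*y 3^2 + (149223087797/5031051264 : ℂ)*y 0^2*y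 1^2*y 2^2 + (218980226561/15093153792 : ℂ)*y 0^2*y 1^3*y 2 + (224210747711/30186307584 : ℂ)*y 0^2*y 1^4 + (626581739821/724471382016 : ℂ)*y 0^3*y 3^3 - (5249183863/16979798016 : ℂ)*y 0^3*y 2^2*y 3 + (17905217673967/724471382016 : ℂ)*y 0^3*y 1*y 2*y 3 + (4825012031641/543353536512 : ℂ)*y 0^3*y 1^2*y 3 + (1642725142703/362235691008 : ℂ)*y 0^4*y 3^2 + (2980126975/15093153792 : ℂ)*y 0^4*y 2^2 + (68220033779/10062102528 : ℂ)*y 0^4*y 1*y 2 + (1416786365/665874432 : ℂ)*y 0^4*y 1^2 + (496131421843/181117845504 : ℂ)*y 0^5*y 3 + (4674612991/30186307584 : ℂ)*y 0^6 - (18460975165/15093153792 : ℂ)*A*y 3^6 - (304604664223/80496820224 : ℂ)*A*y 2^2*y 3^4 + (168842554415/181117845504 : ℂ)*A*y 2^4*y 3^2 - (55/768 : ℂ)*A*y 2^6 + (508752204145/120745230336 : ℂ)*A*y 1*y 2*y 3^4 + (2607880999093/724471382016 : ℂ)*A*y 1*y 2^3*y 3^2 - (53/384 : ℂ)*A*y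 1*y 2^5 + (133652645/104813568 : ℂ)*A*y 1^2*y 3^4 + (504556304605/120745230336 : ℂ)*A*y 1^2*y 2^2*y 3^2 - (11/32 : ℂ)*A*y 1^2*y 2^4 - (8253595195/2829966336 : ℂ)*A*y 1^3*y 2*y 3^2 - (113/384 : ℂ)*A*y 1^3*y 2^3 + (18460975165/15093153792 : ℂ)*A*y 1^4*y 3^2 - (113/768 : ℂ)*A*y 1^4*y 2^2 - (1/32 : ℂ)*A*y 1^5*y 2 + (407062780861/241490460672 : ℂ)*A*y 0*y 3^5 - (241182822523/724471382016 : ℂ)*A*y 0*y 2^2*y 3^3 + (54243016001/45279461376 : ℂ)*A*y 0*y 2^4*y 3 + (424505803307/241490460672 : ℂ)*A*y 0*y 1*y 2*y 3^3 - (229040931737/80496820224 : ℂ)*A*y 0*y 1*y 2^3*y 3 - (4943314535/5326995456 : ℂ)*A*y 0*y 1^2*y 3^3 - (116399830033/120745230336 : ℂ)*A*y 0*y 1^2*y 2^2*y 3 - (287306145835/181117845504 : ℂ)*A*y 0*y 1^3*y 2*y 3 + (46702838527/22639730688 : ℂ)*A*y 0*y 1^4*y 3 - (9089593709/241490460672 :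 ℂ)*A*y 0^2*y 3^4 - (114997607683/362235691008 : ℂ)*A*y 0^2*y 2^2*y 3^2 - (353/2304 : ℂ)*A*y 0^2*y 2^4 + (2965163500151/724471382016 : ℂ)*A*y 0^2*y 1*y 2*y 3^2 + (252738870775/90558922752 : ℂ)*A*y 0^2*y 1*y 2^3 + (130831824787/45279461376 : ℂ)*A*y 0^2*y 1^2*y 3^2 + (64394092561/22639730688 : ℂ)*A*y 0^2*y 1^2*y 2^2 + (52964404051/90558922752 : ℂ)*A*y 0^2*y 1^3*y 2 + (4088851055/5031051264 : ℂ)*A*y 0^2*y 1^4 + (765770245603/362235691008 : ℂ)*A*y 0^3*y 3^3 + (75834784825/271676768256 : ℂ)*A*y 0^3*y 2^2*y 3 + (492230526475/181117845504 : ℂ)*A*y 0^3*y 1*y 2*y 3 + (244849645657/271676768256 : ℂ)*A*y 0^3*y 1^2*y 3 + (149795097311/181117845504 : ℂ)*A*y 0^4*y 3^2 + (4150545151/15093153792 : ℂ)*A*y 0^4*y 2^2 + (32722290937/90558922752 : ℂ)*A*y 0^4*y 1*y 2 + (4674612991/90558922752 : ℂ)*A*y 0^5*y 3) * h0 +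
      (-(1433218483657/241490460672 : ℂ)*y 2*y 3^5 - (63303247633/10653990912 : ℂ)*y 2^3*y 3^3 - (7698921151/2515525632 : ℂ)*y 2^5*y 3 + (7981676165/5031051264 : ℂ)*y 1*y 3^5 + (102290365613/8944091136 : ℂ)*y 1*y 2^2*y 3^3 + (134303419853/60372615168 : ℂ)*y 1*y 2^4*y 3 - (14956519273121/724471382016 : ℂ)*y 1^2*y 2*y 3^3 - (902053193227/45279461376 : ℂ)*y 1^2*y 2^3*y 3 + (4463744269721/724471382016 : ℂ)*y 1^3*y 3^3 + (7082638138277/2173414146048 : ℂ)*y 1^3*y 2^2*y 3 - (1393587677231/724471382016 : ℂ)*y 1^4*y 2*y 3 - (166628720303/67919192064 : ℂ)*y 1^5*y 3 + (872633494129/120745230336 : ℂ)*y 0*y 2*y 3^4 + (34153354913/7546576896 : ℂ)*y 0*y 2^3*y 3^2 - (25/24 : ℂ)*y 0*y 2^5 - (837566053255/120745230336 : ℂ)*y 0*y 1*y 3^4 - (776479321265/45279461376 : ℂ)*y 0*y 1*y 2^2*y 3^2 + (18010214729/3354034176 : ℂ)*y 0*y 1*y 2^4 + (334051681447/30186307584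 : ℂ)*y 0*y 1^2*y 2*y 3^2 + (79747548349/10062102528 : ℂ)*y 0*y 1^2*y 2^3 + (93034322449/13416136704 : ℂ)*y 0*y 1^3*y 3^2 - (45930954311/7546576896 : ℂ)*y 0*y 1^3*y 2^2 - (117549713597/30186307584 : ℂ)*y 0*y 1^4*y 2 - (305909225255/90558922752 : ℂ)*y 0*y 1^5 + (318496128185/60372615168 : ℂ)*y 0^2*y 2*y 3^3 + (28005680377/5031051264 : ℂ)*y 0^2*y 2^3*y 3 + (27745802447/8944091136 : ℂ)*y 0^2*y 1*y 3^3 + (503679614549/45279461376 : ℂ)*y 0^2*y 1*y 2^2*y 3 - (485380875611/241490460672 : ℂ)*y 0^2*y 1^2*y 2*y 3 - (625436355275/181117845504 : ℂ)*y 0^2*y 1^3*y 3 + (4674612991/10062102528 : ℂ)*y 0^3*y 2*y 3^2 - (78506406101/13416136704 : ℂ)*y 0^3*y 1*y 3^2 - (4552330495/5031051264 : ℂ)*y 0^3*y 1*y 2^2 - (5373056575/314440704 : ℂ)*y 0^3*y 1^2*y 2 - (3235125869/628881408 : ℂ)*y 0^3*y 1^3 - (468083743897/60372615168 : ℂ)*y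 0^4*y 1*y 3 - (4674612991/10062102528 : ℂ)*y 0^5*y 1 - (48258056531/241490460672 : ℂ)*A*y 2*y 3^5 - (330617259947/181117845504 : ℂ)*A*y 2^3*y 3^3 - (5026175167/5031051264 : ℂ)*A*y 2^5*y 3 - (12709810925/26832273408 : ℂ)*A*y 1*y 3^5 - (84794984759/181117845504 : ℂ)*A*y 1*y 2^2*y 3^3 - (62098679105/45279461376 : ℂ)*A*y 1*y 2^4*y 3 - (97831549097/120745230336 : ℂ)*A*y 1^2*y 2*y 3^3 + (340039725845/724471382016 : ℂ)*A*y 1^2*y 2^3*y 3 + (62251447415/30186307584 : ℂ)*A*y 1^3*y 3^3 + (180484737547/2173414146048 : ℂ)*A*y 1^3*y 2^2*y 3 + (86958557941/181117845504 : ℂ)*A*y 1^4*y 2*y 3 - (4722763147/7990493184 : ℂ)*A*y 1^5*y 3 + (26820407135/6708068352 : ℂ)*A*y 0*y 2*y 3^4 - (173208329377/45279461376 : ℂ)*A*y 0*y 2^3*y 3^2 - (1/48 : ℂ)*A*y 0*y 2^5 + (419/2304 : ℂ)*A*y 0*y 1*y 2^4 - (8505566279/45279461376 : ℂ)*A*y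 0*y 1^2*y 2^3 - (169169713/295944192 : ℂ)*A*y 0*y 1^5 - (5/48 : ℂ)*A*y 0^3*y 2^3) * h1 +
      ((11020861787/2515525632 : ℂ)*y 2*y 3^5 + (1770437291/2515525632 : ℂ)*y 2^3*y 3^3 + (937060307/559005696 : ℂ)*y 2^5*y 3 - (18460975165/1677017088 : ℂ)*y 1*y 3^5 - (36326131385/2515525632 : ℂ)*y 1*y 2^2*y 3^3 + (4391653393/628881408 : ℂ)*y 1*y 2^4*y 3 - (18236611601/1118011392 : ℂ)*y 1^2*y 2*y 3^3 - (6892361101/838508544 : ℂ)*y 1^2*y 2^3*y 3 + (8837984725/7546576896 : ℂ)*y 1^3*y 3^3 + (233082799795/15093153792 : ℂ)*y 1^3*y 2^2*y 3 + (30164707067/7546576896 : ℂ)*y 1^4*y 2*y 3 - (18460975165/15093153792 : ℂ)*y 1^5*y 3 - (131665684555/5031051264 : ℂ)*y 0*y 2*y 3^4 + (32993823359/5031051264 : ℂ)*y 0*y 2^3*y 3^2 - (1093687043/419254272 : ℂ)*y 0*y 2^5 - (257896560919/10062102528 : ℂ)*y 0*y 1*y 3^4 - (90754913051/5031051264 :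 ℂ)*y 0*y 1*y 2^2*y 3^2 - (70057903511/10062102528 : ℂ)*y 0*y 1*y 2^4 + (50617099085/5031051264 : ℂ)*y 0*y 1^2*y 2*y 3^2 - (27481367875/1677017088 : ℂ)*y 0*y 1^2*y 2^3 - (10557280355/943322112 : ℂ)*y 0*y 1^3*y 3^2 - (15326558423/1775665152 : ℂ)*y 0*y 1^3*y 2^2 - (21242258213/7546576896 : ℂ)*y 0*y 1^4*y 2 + (1095395989/1257762816 : ℂ)*y 0*y 1^5 - (45418256989/5031051264 : ℂ)*y 0^2*y 2*y 3^3 - (65034550721/10062102528 : ℂ)*y 0^2*y 2^3*y 3 - (36698267479/2515525632 : ℂ)*y 0^2*y 1*y 3^3 - (224886037199/5031051264 : ℂ)*y 0^2*y 1*y 2^2*y 3 - (1494677329/186335232 : ℂ)*y 0^2*y 1^2*y 2*y 3 - (15392959493/838508544 : ℂ)*y 0^2*y 1^3*y 3 - (66880031549/7546576896 : ℂ)*y 0^3*y 2*y 3^2 + (7679268607/7546576896 : ℂ)*y 0^3*y 2^3 - (61350886753/10062102528 : ℂ)*y 0^3*y 1*y 3^2 + (8486504881/5031051264 : ℂ)*y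 0^3*y 1*y 2^2 + (147580308521/15093153792 : ℂ)*y 0^3*y 1^2*y 2 - (2347667011/1257762816 : ℂ)*y 0^3*y 1^3 - (40954734071/7546576896 : ℂ)*y 0^4*y 2*y 3 - (4674612991/15093153792 : ℂ)*y 0^5*y 2 - (12045648205/5031051264 : ℂ)*A*y 2*y 3^5 - (7017638987/3773288448 : ℂ)*A*y 2^3*y 3^3 - (5491285375/5031051264 : ℂ)*A*y 2^5*y 3 - (133652645/104813568 : ℂ)*A*y 1*y 3^5) * h2 +
      ((307161421/295944192 : ℂ)*y 3^6 + (285772873/147972096 : ℂ)*y 2^2*y 3^4 - (123420043/24662016 : ℂ)*y 2^4*y 3^2 + y 2^6 - (204225413/147972096 : ℂ)*y 1*y 2*y 3^4 - (119386987/49324032 : ℂ)*y 1*y 2^3*y 3^2 + (603/256 : ℂ)*y 1*y 2^5 - (119930033/295944192 : ℂ)*y 1^2*y 3^4 - (211689991/32882688 : ℂ)*y 1^2*y 2^2*y 3^2 + (167/64 : ℂ)*y 1^2*y 2^4 + (34405199/24662016 : ℂ)*y 1^3*y 2*y 3^2 + (673/384 : ℂ)*y 1^3*y 2^3 - (8293967/3653632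 : ℂ)*y 1^4*y 3^2 + (149/192 : ℂ)*y 1^4*y 2^2 + (161/768 : ℂ)*y 1^5*y 2 + (1/32 : ℂ)*y 1^6 + (23484301/36993024 : ℂ)*y 0*y 3^5 - (78096473/24662016 : ℂ)*y 0*y 2^2*y 3^3 + (19996157/32882688 : ℂ)*y 0*y 2^4*y 3 + (43674925/73986048 : ℂ)*y 0*y 1*y 2*y 3^3 + (273700295/49324032 : ℂ)*y 0*y 1*y 2^3*y 3 + (52796293/49324032 : ℂ)*y 0*y 1^2*y 3^3 + (16912595/12331008 : ℂ)*y 0*y 1^2*y 2^2*y 3 + (709455695/147972096 : ℂ)*y 0*y 1^3*y 2*y 3 + (95716373/295944192 : ℂ)*y 0*y 1^4*y 3 + (744381329/295944192 : ℂ)*y 0^2*y 3^4 + (717567545/98648064 : ℂ)*y 0^2*y 2^2*y 3^2 - (3/16 : ℂ)*y 0^2*y 2^4 + (5/48 : ℂ)*y 0^4*y 2^2) * h3 -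
      ((18460975165/15093153792 : ℂ)*y 2*y 3^8 + (60129503075/15093153792 : ℂ)*y 2^3*y 3^6 + (13481225461/15093153792 : ℂ)*y 2^5*y 3^4 + (5386471807/5031051264 : ℂ)*y 2^7*y 3^2 - (18460975165/15093153792 : ℂ)*y 1*y 3^8 - (4111092151/943322112 : ℂ)*y 1*y 2^2*y 3^6 - (1071234382243/181117845504 : ℂ)*y 1*y 2^4*y 3^4 + (462752562739/181117845504 : ℂ)*y 1*y 2^6*y 3^2 - (55/768 : ℂ)*y 1*y 2^8 + (27887098655/30186307584 : ℂ)*y 1^2*y 2*y 3^6 - (128928570889/60372615168 : ℂ)*y 1^2*y 2^3*y 3^4 + (26196129937/60372615168 : ℂ)*y 1^2*y 2^5*y 3^2 - (161/768 : ℂ)*y 1^2*y 2^7 + (100758830899/11319865344 : ℂ)*y 1^3*y 2^2*y 3^4 + (4664467844231/543353536512 : ℂ)*y 1^3*y 2^4*y 3^2 - (185/384 : ℂ)*y 1^3*y 2^6 + (28525918135/22639730688 : ℂ)*y 1^4*y 2*y 3^4 + (435233239241/543353536512 : ℂ)*y 1^4*y 2^3*y 3^2 - (245/384 : ℂ)*y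 1^4*y 2^5 + (18460975165/15093153792 : ℂ)*y 1^5*y 3^4 - (70081340417/271676768256 : ℂ)*y 1^5*y 2^2*y 3^2 - (113/256 : ℂ)*y 1^5*y 2^4 + (1329879983/135838384128 : ℂ)*y 1^6*y 2*y 3^2 - (137/768 : ℂ)*y 1^6*y 2^3 - (1/32 : ℂ)*y 1^7*y 2^2 - (7310639513/3773288448 : ℂ)*y 0*y 2*y 3^7 - (2064540406987/181117845504 : ℂ)*y 0*y 2^3*y 3^5 + (499673069875/181117845504 : ℂ)*y 0*y 2^5*y 3^3 - (5641954879/5031051264 : ℂ)*y 0*y 2^7*y 3 + (1232371417/30186307584 : ℂ)*y 0*y 1*y 3^7 + (140066557399/60372615168 : ℂ)*y 0*y 1*y 2^2*y 3^5 - (246713378561/60372615168 : ℂ)*y 0*y 1*y 2^4*y 3^3 - (6285426959/1257762816 : ℂ)*y 0*y 1*y 2^6*y 3 + (783016319119/90558922752 : ℂ)*y 0*y 1^2*y 2*y 3^5 + (1083388337887/90558922752 : ℂ)*y 0*y 1^2*y 2^3*y 3^3 - (982452805399/181117845504 : ℂ)*y 0*y 1^2*y 2^5*y 3 + (109096940215/45279461376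 : ℂ)*y 0*y 1^3*y 3^5 + (38216072809/8489899008 : ℂ)*y 0*y 1^3*y 2^2*y 3^3 - (2412120094235/543353536512 : ℂ)*y 0*y 1^3*y 2^4*y 3 - (12675466715/3773288448 : ℂ)*y 0*y 1^4*y 2*y 3^3 - (1514278924009/543353536512 : ℂ)*y 0*y 1^4*y 2^3*y 3 + (532227610633/135838384128 : ℂ)*y 0*y 1^5*y 3^3 + (576296039845/543353536512 : ℂ)*y 0*y 1^5*y 2^2*y 3 - (22072305689/67919192064 : ℂ)*y 0*y 1^6*y 2*y 3 + (9080473765/1886644224 : ℂ)*y 0^2*y 2*y 3^6 - (116539810601/30186307584 : ℂ)*y 0^2*y 2^3*y 3^4 - (1002519061/295944192 : ℂ)*y 0^2*y 2^5*y 3^2 - (1/48 : ℂ)*y 0^2*y 2^7 + (15946332317/10062102528 : ℂ)*y 0^2*y 1*y 3^6 + (1074067420069/181117845504 : ℂ)*y 0^2*y 1*y 2^2*y 3^4 - (697147422505/45279461376 : ℂ)*y 0^2*y 1*y 2^4*y 3^2 - (5/384 : ℂ)*y 0^2*y 1*y 2^6 + (121670791181/60372615168 : ℂ)*y 0^2*y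 1^2*y 2*y 3^4 - (27282456013/7546576896 : ℂ)*y 0^2*y 1^2*y 2^3*y 3^2 + (9436692811/3354034176 : ℂ)*y 0^2*y 1^2*y 2^5 + (93448432543/30186307584 : ℂ)*y 0^2*y 1^3*y 3^4 + (2295212158795/543353536512 : ℂ)*y 0^2*y 1^3*y 2^2*y 3^2 + (17640480589/3354034176 : ℂ)*y 0^2*y 1^3*y 2^4 + (247216383991/60372615168 : ℂ)*y 0^2*y 1^4*y 2*y 3^2 + (310540774295/90558922752 : ℂ)*y 0^2*y 1^4*y 2^3 + (512897169043/135838384128 : ℂ)*y 0^2*y 1^5*y 3^2 + (74797790863/90558922752 : ℂ)*y 0^2*y 1^5*y 2^2 - (1662919187/5031051264 : ℂ)*y 0^2*y 1^6*y 2 + (20476967455/11319865344 : ℂ)*y 0^3*y 2*y 3^5 - (2575162345223/543353536512 : ℂ)*y 0^3*y 2^3*y 3^3 - (257/1152 : ℂ)*y 0^3*y 2^5*y 3 + (184625366119/90558922752 : ℂ)*y 0^3*y 1*y 3^5 + (3926385785807/543353536512 : ℂ)*y 0^3*y 1*y 2^2*y 3^3 + (1501827001987/271676768256 : ℂ)*y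 0^3*y 1*y 2^4*y 3 + (4861678350815/271676768256 : ℂ)*y 0^3*y 1^2*y 2*y 3^3 + (7650077245955/543353536512 : ℂ)*y 0^3*y 1^2*y 2^3*y 3 + (106754796653/15980986368 : ℂ)*y 0^3*y 1^3*y 3^3 + (5692880162279/543353536512 : ℂ)*y 0^3*y 1^3*y 2^2*y 3 + (1004231983903/271676768256 : ℂ)*y 0^3*y 1^4*y 2*y 3 + (5301816989/5031051264 : ℂ)*y 0^3*y 1^5*y 3 + (153993787073/45279461376 : ℂ)*y 0^4*y 2*y 3^4 + (12165023393/67919192064 : ℂ)*y 0^4*y 2^3*y 3^2 - (5/48 : ℂ)*y 0^4*y 2^5 + (50864741273/10062102528 : ℂ)*y 0^4*y 1*y 3^4 + (3659193469897/543353536512 : ℂ)*y 0^4*y 1*y 2^2*y 3^2 + (1006138111/15093153792 : ℂ)*y 0^4*y 1*y 2^4 + (4578500779033/543353536512 : ℂ)*y 0^4*y 1^2*y 2*y 3^2 + (57625561843/90558922752 : ℂ)*y 0^4*y 1^2*y 2^3 + (244849645657/135838384128 : ℂ)*y 0^4*y 1^3*y 3^2 + (32722290937/90558922752 : ℂ)*y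 0^4*y 1^3*y 2^2 + (4535015135/2829966336 : ℂ)*y 0^5*y 2*y 3^3 + (3364443391/7546576896 : ℂ)*y 0^5*y 2^3*y 3 + (25744951717/15093153792 : ℂ)*y 0^5*y 1*y 3^3 + (4441693951/3354034176 : ℂ)*y 0^5*y 1*y 2^2*y 3 + (23373064955/30186307584 : ℂ)*y 0^5*y 1^2*y 2*y 3 + (4674612991/45279461376 : ℂ)*y 0^6*y 2*y 3^2 + (4674612991/45279461376 : ℂ)*y 0^6*y 1*y 3^2) * hA
  have e3 : y 3 ^ 9 = 0 := by
    linear_combination ((538379575639/660696298752 : ℂ)*y 2*y 3^5 + (3081866188501/1761856796672 : ℂ)*y 2^3*y 3^3 - (1038557840815097/253707378720768 : ℂ)*y 2^5*y 3 + (2668159124531/4530488905728 : ℂ)*y 1*y 3^5 - (142080030686065/126853689360384 : ℂ)*y 1*y 2^2*y 3^3 + (3597401632286363/253707378720768 : ℂ)*y 1*y 2^4*y 3 - (489094596239/330348149376 : ℂ)*y 1^2*y 2*y 3^3 - (7576223379741803/253707378720768 : ℂ)*y 1^2*y 2^3*y 3 - (36937092006655/4530488905728 : ℂ)*y 1^3*y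 3^3 + (16601697676627/36243911245824 : ℂ)*y 1^3*y 2^2*y 3 - (132748717317647/21142281560064 : ℂ)*y 1^4*y 2*y 3 - (44249793905507/15856711170048 : ℂ)*y 0*y 2*y 3^4 - (15285854189359/7047427186688 : ℂ)*y 0*y 2^3*y 3^2 - (3273022043/4351606784 : ℂ)*y 0*y 2^5 + (3960359063383/1031330807808 : ℂ)*y 0*y 1*y 3^4 - (79627250167889/1605742903296 : ℂ)*y 0*y 1*y 2^2*y 3^2 - (90494428635781/126853689360384 : ℂ)*y 0*y 1*y 2^4 - (600443316681521/21142281560064 : ℂ)*y 0*y 1^2*y 2*y 3^2 - (9239083253753873/253707378720768 : ℂ)*y 0*y 1^2*y 2^3 - (4627355680807/880928398336 : ℂ)*y 0*y 1^3*y 3^2 - (6581333445345157/253707378720768 : ℂ)*y 0*y 1^3*y 2^2 - (1055169411355615/84569126240256 : ℂ)*y 0*y 1^4*y 2 - (438496407905245/253707378720768 : ℂ)*y 0*y 1^5 - (152770841054957/9060977811456 : ℂ)*y 0^2*y 2*y 3^3 - (1584097482230119/253707378720768 : ℂ)*y 0^2*y 2^3*y 3 - (287853540419525/18121955622912 : ℂ)*y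 0^2*y 1*y 3^3 - (7770963202276633/253707378720768 : ℂ)*y 0^2*y 1*y 2^2*y 3 - (682641433940533/28189708746752 : ℂ)*y 0^2*y 1^2*y 2*y 3 - (10323996316253/4451006644224 : ℂ)*y 0^2*y 1^3*y 3 - (111671851885/81420853248 : ℂ)*y 0^3*y 2*y 3^2 + (915123799248377/761122136162304 : ℂ)*y 0^3*y 2^3 - (696192939164155/126853689360384 : ℂ)*y 0^3*y 1*y 3^2 - (4868734590052097/761122136162304 : ℂ)*y 0^3*y 1*y 2^2 - (4027827976368589/761122136162304 : ℂ)*y 0^3*y 1^2*y 2 - (43453427606203/108731733737472 : ℂ)*y 0^3*y 1^3 - (108568054676273/95140267020288 : ℂ)*y 0^4*y 2*y 3 - (502106079949531/380561068081152 : ℂ)*y 0^4*y 1*y 3 + (25984677348485/42284563120128 : ℂ)*A*y 2*y 3^5 - (44809889428337/63426844680192 : ℂ)*A*y 2^3*y 3^3 - (2492795838487811/761122136162304 : ℂ)*A*y 2^5*y 3 + (7198648030259/9060977811456 : ℂ)*A*y 1*y 3^5 - (37535878031923/63426844680192 : ℂ)*A*y 1*y 2^2*y 3^3 + (35094175863077/13353019932672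 : ℂ)*A*y 1*y 2^4*y 3 - (82095014821609/42284563120128 : ℂ)*A*y 1^2*y 2*y 3^3 - (2179291808600387/253707378720768 : ℂ)*A*y 1^2*y 2^3*y 3 - (5/48 : ℂ)*A*y 1^3*y 3^3 - (658469135507839/108731733737472 : ℂ)*A*y 1^3*y 2^2*y 3 - (13103809783325/10014764949504 : ℂ)*A*y 1^4*y 2*y 3 - (7387418401331/9060977811456 : ℂ)*A*y 1^5*y 3 - (50950893899089/31713422340096 : ℂ)*A*y 0*y 2*y 3^4 - (79512535020139/40059059798016 : ℂ)*A*y 0*y 2^3*y 3^2 + (419966619281501/761122136162304 : ℂ)*A*y 0*y 2^5 - (18390318152599/18121955622912 : ℂ)*A*y 0*y 1*y 3^4 - (267859529681255/108731733737472 : ℂ)*A*y 0*y 1*y 2^2*y 3^2 - (1234151417777197/761122136162304 : ℂ)*A*y 0*y 1*y 2^4 - (6006841617305365/761122136162304 : ℂ)*A*y 0*y 1^2*y 2*y 3^2 + (1761134434280869/761122136162304 : ℂ)*A*y 0*y 1^2*y 2^3 + (222264684413891/108731733737472 : ℂ)*A*y 0*y 1^3*y 3^2 + (592214528012483/253707378720768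 : ℂ)*A*y 0*y 1^3*y 2^2 + (360554016410837/380561068081152 : ℂ)*A*y 0*y 1^4*y 2 - (699595909697/3964177792512 : ℂ)*A*y 0*y 1^5 + (154172474926739/63426844680192 : ℂ)*A*y 0^2*y 2*y 3^3 + (1532465405828915/761122136162304 : ℂ)*A*y 0^2*y 2^3*y 3 - (102343293132727/42284563120128 : ℂ)*A*y 0^2*y 1*y 3^3 + (5815552891994035/761122136162304 : ℂ)*A*y 0^2*y 1*y 2^2*y 3 + (351383060871935/761122136162304 : ℂ)*A*y 0^2*y 1^2*y 2*y 3 + (731184196551401/761122136162304 : ℂ)*A*y 0^2*y 1^3*y 3 + (51740500919363/15856711170048 : ℂ)*A*y 0^3*y 2*y 3^2 + (15934968177973/42284563120128 : ℂ)*A*y 0^3*y 1*y 3^2 + (2201653729575/7047427186688 : ℂ)*A*y 0^3*y 1*y 2^2 + (2201653729575/14094854373376 : ℂ)*A*y 0^3*y 1^2*y 2 + (4242738285329/4817228709888 : ℂ)*A*y 0^4*y 2*y 3 + (137865836921233/380561068081152 : ℂ)*A*y 0^4*y 1*y 3) * h0 +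
      (-(94259881203601/63426844680192 : ℂ)*y 3^6 - (389016523058419/63426844680192 : ℂ)*y 2^2*y 3^4 + (31755464429141/253707378720768 : ℂ)*y 2^4*y 3^2 - (52865378668901/18121955622912 : ℂ)*y 1*y 2*y 3^4 - (111061526346305/13353019932672 : ℂ)*y 1*y 2^3*y 3^2 + (9819066129/4351606784 : ℂ)*y 1*y 2^5 + (55909007300531/6040651874304 : ℂ)*y 1^2*y 3^4 + (2261106269829629/253707378720768 : ℂ)*y 1^2*y 2^2*y 3^2 + (620921405219749/36243911245824 : ℂ)*y 1^2*y 2^4 + (1741775585995363/84569126240256 : ℂ)*y 1^3*y 2*y 3^2 + (1090021937852263/47570133510144 : ℂ)*y 1^3*y 2^3 - (10398767582977/5285570390016 : ℂ)*y 1^4*y 3^2 + (4658676821226409/380561068081152 : ℂ)*y 1^4*y 2^2 + (523786736020619/380561068081152 : ℂ)*y 1^5*y 2 - (182046737806559/761122136162304 : ℂ)*y 1^6 - (133901659128721/63426844680192 : ℂ)*y 0*y 3^5 + (9945181152169/1669127491584 : ℂ)*y 0*y 2^2*y 3^3 - (14008867493135/9060977811456 : ℂ)*y 0*y 1*y 2*y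 3^3 + (4730906857070215/126853689360384 : ℂ)*y 0*y 1*y 2^3*y 3 + (245004150330259/10571140780032 : ℂ)*y 0*y 1^2*y 3^3 + (6146733950530867/126853689360384 : ℂ)*y 0*y 1^2*y 2^2*y 3 + (9540551450787641/380561068081152 : ℂ)*y 0*y 1^3*y 2*y 3 - (77090507800349/54365866868736 : ℂ)*y 0*y 1^4*y 3 - (185435970431377/63426844680192 : ℂ)*y 0^2*y 3^4 + (610907998383457/21142281560064 : ℂ)*y 0^2*y 2^2*y 3^2 + (4401991076737963/126853689360384 : ℂ)*y 0^2*y 1*y 2*y 3^2 - (915123799248377/253707378720768 : ℂ)*y 0^2*y 1*y 2^3 + (2779695136323887/126853689360384 : ℂ)*y 0^2*y 1^2*y 3^2 + (4868734590052097/253707378720768 : ℂ)*y 0^2*y 1^2*y 2^2 + (626356554365677/36243911245824 : ℂ)*y 0^2*y 1^3*y 2 + (43453427606203/36243911245824 : ℂ)*y 0^2*y 1^4 + (137865836921233/21142281560064 : ℂ)*y 0^3*y 3^3 + (108568054676273/31713422340096 : ℂ)*y 0^3*y 1*y 2*y 3 + (457851795356615/63426844680192 : ℂ)*y 0^3*y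 1^2*y 3 - (157686725883793/126853689360384 : ℂ)*A*y 3^6 - (2472073730543/5285570390016 : ℂ)*A*y 2^2*y 3^4 + (1725328043859191/761122136162304 : ℂ)*A*y 2^4*y 3^2 + (304598750339917/63426844680192 : ℂ)*A*y 1*y 2*y 3^4 - (424549695587957/380561068081152 : ℂ)*A*y 1*y 2^3*y 3^2 - (172388029298063/761122136162304 : ℂ)*A*y 1*y 2^5 - (33086691789173/63426844680192 : ℂ)*A*y 1^2*y 3^4 + (916919956220627/95140267020288 : ℂ)*A*y 1^2*y 2^2*y 3^2 + (288784844833/110116049792 : ℂ)*A*y 1^2*y 2^4 + (215512923001081/126853689360384 : ℂ)*A*y 1^3*y 2*y 3^2 + (144757452526459/126853689360384 : ℂ)*A*y 1^3*y 2^3 - (322496966139035/761122136162304 : ℂ)*A*y 1^4*y 3^2 - (8241495819643/27182933434368 : ℂ)*A*y 1^4*y 2^2 - (748750270496771/761122136162304 : ℂ)*A*y 1^5*y 2 - (13506131418055/63426844680192 : ℂ)*A*y 1^6 + (137865836921233/63426844680192 : ℂ)*A*y 0*y 3^5 - (135938978568305/95140267020288 : ℂ)*A*y 0*y 2^4*y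 3 - (9/32 : ℂ)*A*y 0^2*y 3^4 + (129937481336209/63426844680192 : ℂ)*A*y 0^3*y 3^3 + (137865836921233/126853689360384 : ℂ)*A*y 0^4*y 3^2) * h1 +
      (y 3^6 + (11385971805587/21142281560064 : ℂ)*y 2^2*y 3^4 - (76639036187485/42284563120128 : ℂ)*y 2^4*y 3^2 - (232190865/543950848 : ℂ)*y 2^6 - (631111647107279/42284563120128 : ℂ)*y 1*y 2*y 3^4 + (939642671479787/126853689360384 : ℂ)*y 1*y 2^3*y 3^2 - (315471408139243/42284563120128 : ℂ)*y 1*y 2^5 + (7198648030259/1006775312384 : ℂ)*y 1^2*y 3^4 - (24255749498135/1112751661056 : ℂ)*y 1^2*y 2^2*y 3^2 - (216974867760359/126853689360384 : ℂ)*y 1^2*y 2^4 + (61930401243097/5285570390016 : ℂ)*y 1^3*y 2*y 3^2 - (28196207816575/14094854373376 : ℂ)*y 1^3*y 2^3 - (6915492473651/4530488905728 : ℂ)*y 1^4*y 3^2 + (241165343576557/126853689360384 : ℂ)*y 1^4*y 2^2 + (9611542679639/3020325937152 : ℂ)*y 1^5*y 2 + (7387418401331/9060977811456 : ℂ)*y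 1^6 - (115402162763665/14094854373376 : ℂ)*y 0*y 3^5 + (111147833794769/7047427186688 : ℂ)*y 0*y 2^2*y 3^3 - (15456968439649/1761856796672 : ℂ)*y 0*y 2^4*y 3 - (573788782964921/42284563120128 : ℂ)*y 0*y 1*y 2*y 3^3 + (1857113744069/162841706496 : ℂ)*y 0*y 1*y 2^3*y 3 + (839248416487855/42284563120128 : ℂ)*y 0*y 1^2*y 3^3 - (287005415106043/14094854373376 : ℂ)*y 0*y 1^2*y 2^2*y 3 + (1841987825345029/126853689360384 : ℂ)*y 0*y 1^3*y 2*y 3 + (168744192916825/42284563120128 : ℂ)*y 0*y 1^4*y 3 - (123991214647441/10571140780032 : ℂ)*y 0^2*y 3^4 - (71020453501915/10571140780032 : ℂ)*y 0^2*y 2^2*y 3^2 - (606640767/621658112 : ℂ)*y 0^2*y 2^4 - (426104002689503/10571140780032 : ℂ)*y 0^2*y 1*y 2*y 3^2 - (307547301778909/42284563120128 : ℂ)*y 0^2*y 1*y 2^3 - (58951765503157/10571140780032 : ℂ)*y 0^2*y 1^2*y 3^2 - (622894030524377/21142281560064 : ℂ)*y 0^2*y 1^2*y 2^2 - (15342087174107/1982088896256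 : ℂ)*y 0^2*y 1^3*y 2 + (47086735083511/63426844680192 : ℂ)*y 0^2*y 1^4 - (655633673369813/63426844680192 : ℂ)*y 0^3*y 3^3 + (72296303740513/9060977811456 : ℂ)*y 0^3*y 2^2*y 3 - (631116534152761/126853689360384 : ℂ)*y 0^3*y 1*y 2*y 3 - (185472170985679/42284563120128 : ℂ)*y 0^3*y 1^2*y 3 - (133901659128721/31713422340096 : ℂ)*y 0^4*y 3^2 - (6604961188725/14094854373376 : ℂ)*y 0^4*y 1*y 2 - (137865836921233/126853689360384 : ℂ)*y 0^5*y 3 - (13740298143571/10571140780032 : ℂ)*A*y 2^2*y 3^4 - (17536457980493/10571140780032 : ℂ)*A*y 2^4*y 3^2 + (19002392789893/10571140780032 : ℂ)*A*y 1*y 2*y 3^4 + (29835067519025/31713422340096 : ℂ)*A*y 1*y 2^3*y 3^2) * h2 +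
      ((11974577/343547904 : ℂ)*y 2*y 3^5 - (3514139649/4351606784 : ℂ)*y 2^3*y 3^3 + (696572595/543950848 : ℂ)*y 2^5*y 3 - (607264093/1398730752 : ℂ)*y 1*y 3^5 + (3283533067/1864974336 : ℂ)*y 1*y 2^2*y 3^3 + (6514082731/2175803392 : ℂ)*y 1*y 2^4*y 3 + (4259701873/5594923008 : ℂ)*y 1^2*y 2*y 3^3 - (6238978451/13054820352 : ℂ)*y 1^2*y 2^3*y 3 + (6729285781/13054820352 : ℂ)*y 1^3*y 3^3 + (5416943099/687095808 : ℂ)*y 1^3*y 2^2*y 3 + (17782304761/1864974336 : ℂ)*y 1^4*y 2*y 3 + (19500407/98156544 : ℂ)*y 1^5*y 3 - (995280215/1631852544 : ℂ)*y 0*y 2*y 3^4 - (119459469/621658112 : ℂ)*y 0*y 2^3*y 3^2 - (2904725903/2447778816 : ℂ)*y 0*y 1*y 3^4 - (7240380743/1864974336 : ℂ)*y 0*y 1*y 2^2*y 3^2 + (1819922301/621658112 : ℂ)*y 0*y 1*y 2^4 + (76301336203/13054820352 : ℂ)*y 0*y 1^2*y 2*y 3^2 + (5395805871/621658112 : ℂ)*y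 0*y 1^2*y 2^3 + (155301954229/39164461056 : ℂ)*y 0*y 1^3*y 3^2 + (3394990325/621658112 : ℂ)*y 0*y 1^3*y 2^2 + (1394174779/621658112 : ℂ)*y 0*y 1^4*y 2) * h3 -
      ((39866346919169/63426844680192 : ℂ)*y 2^2*y 3^7 + (74474774194853/63426844680192 : ℂ)*y 2^4*y 3^5 + (21318549850795/21142281560064 : ℂ)*y 2^6*y 3^3 - (112733497381919/42284563120128 : ℂ)*y 1*y 2*y 3^7 - (334683875047567/126853689360384 : ℂ)*y 1*y 2^3*y 3^5 + (49836747007279/21142281560064 : ℂ)*y 1*y 2^5*y 3^3 - (64455772477493/21142281560064 : ℂ)*y 1*y 2^7*y 3 + (7198648030259/9060977811456 : ℂ)*y 1^2*y 3^7 + (9049783688641/1132622226432 : ℂ)*y 1^2*y 2^2*y 3^5 - (696362067858685/126853689360384 : ℂ)*y 1^2*y 2^4*y 3^3 - (26234117781243/7047427186688 : ℂ)*y 1^2*y 2^6*y 3 - (36608099744137/126853689360384 : ℂ)*y 1^3*y 2*y 3^5 + (853079258463485/63426844680192 : ℂ)*y 1^3*y 2^3*y 3^3 - (235648403632189/126853689360384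 : ℂ)*y 1^3*y 2^5*y 3 - (5/48 : ℂ)*y 1^4*y 3^5 - (31413002576519/10571140780032 : ℂ)*y 1^4*y 2^2*y 3^3 - (218554953835441/18121955622912 : ℂ)*y 1^4*y 2^4*y 3 - (61090215886067/42284563120128 : ℂ)*y 1^5*y 2*y 3^3 - (295441499305045/42284563120128 : ℂ)*y 1^5*y 2^3*y 3 - (7387418401331/9060977811456 : ℂ)*y 1^6*y 3^3 - (491976608870231/126853689360384 : ℂ)*y 1^6*y 2^2*y 3 - (78724191645427/63426844680192 : ℂ)*y 1^7*y 2*y 3 - (157686725883793/126853689360384 : ℂ)*y 0*y 3^8 + (4549578307261/18121955622912 : ℂ)*y 0*y 2^2*y 3^6 + (14200348242403/3523713593344 : ℂ)*y 0*y 2^4*y 3^4 - (24006652072699/7047427186688 : ℂ)*y 0*y 2^6*y 3^2 + (299885847842821/42284563120128 : ℂ)*y 0*y 1*y 2*y 3^6 - (63617731571525/14094854373376 : ℂ)*y 0*y 1*y 2^3*y 3^4 - (57640383258301/14094854373376 : ℂ)*y 0*y 1*y 2^5*y 3^2 + (202213589/621658112 : ℂ)*y 0*y 1*y 2^7 + (2218844733571/42284563120128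 : ℂ)*y 0*y 1^2*y 3^6 + (2379343489844273/126853689360384 : ℂ)*y 0*y 1^2*y 2^2*y 3^4 - (8858050401857/880928398336 : ℂ)*y 0*y 1^2*y 2^4*y 3^2 + (4786113629/4351606784 : ℂ)*y 0*y 1^2*y 2^6 - (1596984366658589/126853689360384 : ℂ)*y 0*y 1^3*y 2*y 3^4 - (8115085398197/488525119488 : ℂ)*y 0*y 1^3*y 2^3*y 3^2 + (897948237772303/126853689360384 : ℂ)*y 0*y 1^3*y 2^5 + (9427971167173/6676509966336 : ℂ)*y 0*y 1^4*y 3^4 - (99784952638441/6040651874304 : ℂ)*y 0*y 1^4*y 2^2*y 3^2 + (840684260947637/126853689360384 : ℂ)*y 0*y 1^4*y 2^4 - (1107663171441557/380561068081152 : ℂ)*y 0*y 1^5*y 2*y 3^2 + (17881633061977/10571140780032 : ℂ)*y 0*y 1^5*y 2^3 - (6743343346939/3338254983168 : ℂ)*y 0*y 1^6*y 3^2 - (22349760413549/15856711170048 : ℂ)*y 0*y 1^6*y 2^2 - (19102898695631/31713422340096 : ℂ)*y 0*y 1^7*y 2 + (118044947958673/126853689360384 : ℂ)*y 0^2*y 3^7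 - (1916939555875/386749052928 : ℂ)*y 0^2*y 2^2*y 3^5 - (863125082646157/126853689360384 : ℂ)*y 0^2*y 2^4*y 3^3 - (202213589/621658112 : ℂ)*y 0^2*y 2^6*y 3 + (140848620611203/14094854373376 : ℂ)*y 0^2*y 1*y 2*y 3^5 - (74107819873543/6040651874304 : ℂ)*y 0^2*y 1*y 2^3*y 3^3 - (67869885487595/21142281560064 : ℂ)*y 0^2*y 1*y 2^5*y 3 - (210222572370971/42284563120128 : ℂ)*y 0^2*y 1^2*y 3^5 - (492716124421567/126853689360384 : ℂ)*y 0^2*y 1^2*y 2^2*y 3^3 + (247572980436095/18121955622912 : ℂ)*y 0^2*y 1^2*y 2^4*y 3 - (4915440263439161/380561068081152 : ℂ)*y 0^2*y 1^3*y 2*y 3^3 + (21510726683935/1160247158784 : ℂ)*y 0^2*y 1^3*y 2^3*y 3 + (440049101525855/95140267020288 : ℂ)*y 0^2*y 1^4*y 3^3 + (153876542320831/20029529899008 : ℂ)*y 0^2*y 1^4*y 2^2*y 3 + (30421188483535/20029529899008 : ℂ)*y 0^2*y 1^5*y 2*y 3 - (35893200528359/63426844680192 : ℂ)*y 0^2*y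 1^6*y 3 + (120027036854929/63426844680192 : ℂ)*y 0^3*y 3^6 - (46393335226487/63426844680192 : ℂ)*y 0^3*y 2^2*y 3^4 + (15693801453265/6040651874304 : ℂ)*y 0^3*y 2^4*y 3^2 + (817143968811199/126853689360384 : ℂ)*y 0^3*y 1*y 2*y 3^4 + (705908418207551/31713422340096 : ℂ)*y 0^3*y 1*y 2^3*y 3^2 - (188751618087481/42284563120128 : ℂ)*y 0^3*y 1^2*y 3^4 + (211432426089749/10571140780032 : ℂ)*y 0^3*y 1^2*y 2^2*y 3^2 + (2201653729575/7047427186688 : ℂ)*y 0^3*y 1^2*y 2^4 + (642713310861809/190280534040576 : ℂ)*y 0^3*y 1^3*y 2*y 3^2 + (6604961188725/14094854373376 : ℂ)*y 0^3*y 1^3*y 2^3 + (731184196551401/380561068081152 : ℂ)*y 0^3*y 1^4*y 3^2 + (2201653729575/14094854373376 : ℂ)*y 0^3*y 1^4*y 2^2 + (112098681269905/63426844680192 : ℂ)*y 0^4*y 3^5 + (628598774210497/95140267020288 : ℂ)*y 0^4*y 2^2*y 3^3 + (2677064378257301/190280534040576 : ℂ)*y 0^4*y 1*y 2*y 3^3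 + (81850703905013/54365866868736 : ℂ)*y 0^4*y 1*y 2^3*y 3 + (60670752017821/54365866868736 : ℂ)*y 0^4*y 1^2*y 3^3 + (138285010942229/63426844680192 : ℂ)*y 0^4*y 1^2*y 2^2*y 3 + (256755138318283/380561068081152 : ℂ)*y 0^4*y 1^3*y 2*y 3 + (132580266531217/42284563120128 : ℂ)*y 0^5*y 3^4 + (1083950159845681/380561068081152 : ℂ)*y 0^5*y 2^2*y 3^2 + (42220936772663/9060977811456 : ℂ)*y 0^5*y 1*y 2*y 3^2 + (137865836921233/190280534040576 : ℂ)*y 0^5*y 1^2*y 3^2 + (137865836921233/126853689360384 : ℂ)*y 0^6*y 3^3) * hA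
  funext i
  fin_cases i <;> simp only [Pi.zero_apply] <;>
    [exact pow_eq_zero_iff (by norm_num) |>.mp e0;
     exact pow_eq_zero_iff (by norm_num) |>.mp e1;
     exact pow_eq_zero_iff (by norm_num) |>.mp e2;
     exact pow_eq_zero_iff (by norm_num) |>.mp e3]
end
end

section
/- The quartic polynomial Ψ with A = -1-2ζ-2ζ³, B = 3+A is invariant (up to nonzero scalar) under the linear transformation of ℂ⁴ given by the matrix γ₂ of Theorem 4.7, i.e., Ψ(γ₂·y) = cΨ(y) for some nonzero constant c. -/
noncomputable section

def γ₂ : Matrix (Fin 4) (Fin 4) ℂ :=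
  !![1, ζ ^ 2, ζ + ζ ^ 2 - ζ ^ 3, 1 - ζ - ζ ^ 3;
     ζ ^ 2, 1, 1 - ζ - ζ ^ 3, ζ + ζ ^ 2 - ζ ^ 3;
     ζ + ζ ^ 2 - ζ ^ 3, 1 - ζ - ζ ^ 3, -1, -(ζ ^ 2);
     1 - ζ - ζ ^ 3, ζ + ζ ^ 2 - ζ ^ 3, -(ζ ^ 2), -1]

set_option maxRecDepth 8000 in
set_option maxHeartbeats 1600000 in
theorem gamma2_preserves_Psi :
    ∃ c : ℂ, c ≠ 0 ∧ ∀ y : Fin 4 → ℂ, psi A B (γ₂.mulVec y) = c * psi A B y := by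
  refine ⟨32, by norm_num, fun y => ?_⟩
  have hζ : ζ ^ 4 = -1 := by
    rw [ζ, ← Complex.exp_nat_mul]
    push_cast
    rw [show (4 : ℂ) * (2 * Real.pi * Complex.I / 8) = Real.pi * Complex.I by ring,
      Complex.exp_pi_mul_I]
  have e0 : γ₂.mulVec y 0 = y 0 + ζ ^ 2 * y 1 + (ζ + ζ ^ 2 - ζ ^ 3) * y 2 + (1 - ζ - ζ ^ 3) * y 3 := by
    simp [γ₂, Matrix.mulVec, dotProduct, Fin.sum_univ_four]
  have e1 : γ₂.mulVec y 1 = ζ ^ 2 * y 0 + y 1 + (1 - ζ - ζ ^ 3) * y 2 + (ζ + ζ ^ 2 - ζ ^ 3) * y 3 := by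
    simp [γ₂, Matrix.mulVec, dotProduct, Fin.sum_univ_four]
  have e2 : γ₂.mulVec y 2 = (ζ + ζ ^ 2 - ζ ^ 3) * y 0 + (1 - ζ - ζ ^ 3) * y 1 + -y 2 + -(ζ ^ 2) * y 3 := by
    simp [γ₂, Matrix.mulVec, dotProduct, Fin.sum_univ_four]
  have e3 : γ₂.mulVec y 3 = (1 - ζ - ζ ^ 3) * y 0 + (ζ + ζ ^ 2 - ζ ^ 3) * y 1 + -(ζ ^ 2) * y 2 + -y 3 := by
    simp [γ₂, Matrix.mulVec, dotProduct, Fin.sum_univ_four]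
  simp only [psi, A, B, e0, e1, e2, e3]
  linear_combination ((-32) * (y 2) * (y 3) ^ 3 + (-32) * (y 2) ^ 3 * (y 3) + (-4) * (y 1) * (y 3) ^ 3 + (60) * (y 1) * (y 2) ^ 2 * (y 3) + (40) * (y 1) ^ 2 * (y 2) * (y 3) + (4) * (y 1) ^ 3 * (y 3) + (60) * (y 0) * (y 2) * (y 3) ^ 2 + (-4) * (y 0) * (y 2) ^ 3 + (40) * (y 0) * (y 1) * (y 3) ^ 2 + (40) * (y 0) * (y 1) * (y 2) ^ 2 + (-60) * (y 0) * (y 1) ^ 2 * (y 2) + (-32) * (y 0) * (y 1) ^ 3 + (40) * (y 0) ^ 2 * (y 2) * (y 3) + (-60) * (y 0) ^ 2 * (y 1) * (y 3) + (4) * (y 0) ^ 3 * (y 2) + (-32) * (y 0) ^ 3 * (y 1) + (-2) * ζ * (y 3) ^ 4 + (-4) * ζ * (y 2) ^ 2 * (y 3) ^ 2 + (-2) * ζ * (y 2) ^ 4 + (8) * ζ * (y 1) * (y 3) ^ 3 + (-64) * ζ * (y 1) * (y 2) ^ 2 * (y 3) + (20) * ζ * (y 1) ^ 2 * (y 3)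 ^ 2 + (40) * ζ * (y 1) ^ 2 * (y 2) * (y 3) + (12) * ζ * (y 1) ^ 2 * (y 2) ^ 2 + (-8) * ζ * (y 1) ^ 3 * (y 3) + (-2) * ζ * (y 1) ^ 4 + (-64) * ζ * (y 0) * (y 2) * (y 3) ^ 2 + (8) * ζ * (y 0) * (y 2) ^ 3 + (40) * ζ * (y 0) * (y 1) * (y 3) ^ 2 + (48) * ζ * (y 0) * (y 1) * (y 2) * (y 3) + (40) * ζ * (y 0) * (y 1) * (y 2) ^ 2 + (64) * ζ * (y 0) * (y 1) ^ 2 * (y 2) + (12) * ζ * (y 0) ^ 2 * (y 3) ^ 2 + (40) * ζ * (y 0) ^ 2 * (y 2) * (y 3) + (20) * ζ * (y 0) ^ 2 * (y 2) ^ 2 + (64) * ζ * (y 0) ^ 2 * (y 1) * (y 3) + (-4) * ζ * (y 0) ^ 2 * (y 1) ^ 2 + (-8) * ζ * (y 0) ^ 3 * (y 2) + (-2) * ζ * (y 0) ^ 4 + (2) * ζ ^ 2 * (y 3) ^ 4 + (-4) * ζ ^ 2 * (y 2) ^ 2 * (y 3) ^ 2 + (2) * ζ ^ 2 * (y 2)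 ^ 4 + (-36) * ζ ^ 2 * (y 1) * (y 2) * (y 3) ^ 2 + (16) * ζ ^ 2 * (y 1) * (y 2) ^ 2 * (y 3) + (-12) * ζ ^ 2 * (y 1) * (y 2) ^ 3 + (-20) * ζ ^ 2 * (y 1) ^ 2 * (y 3) ^ 2 + (48) * ζ ^ 2 * (y 1) ^ 2 * (y 2) * (y 3) + (-4) * ζ ^ 2 * (y 1) ^ 2 * (y 2) ^ 2 + (12) * ζ ^ 2 * (y 1) ^ 3 * (y 2) + (2) * ζ ^ 2 * (y 1) ^ 4 + (-12) * ζ ^ 2 * (y 0) * (y 3) ^ 3 + (16) * ζ ^ 2 * (y 0) * (y 2) * (y 3) ^ 2 + (-36) * ζ ^ 2 * (y 0) * (y 2) ^ 2 * (y 3) + (48) * ζ ^ 2 * (y 0) * (y 1) * (y 3) ^ 2 + (-16) * ζ ^ 2 * (y 0) * (y 1) * (y 2) * (y 3) + (48) * ζ ^ 2 * (y 0) * (y 1) * (y 2) ^ 2 + (36) * ζ ^ 2 * (y 0) * (y 1) ^ 2 * (y 3) + (-16) * ζ ^ 2 * (y 0) * (y 1) ^ 2 * (y 2) + (-4) * ζ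 ^ 2 * (y 0) ^ 2 * (y 3) ^ 2 + (48) * ζ ^ 2 * (y 0) ^ 2 * (y 2) * (y 3) + (-20) * ζ ^ 2 * (y 0) ^ 2 * (y 2) ^ 2 + (-16) * ζ ^ 2 * (y 0) ^ 2 * (y 1) * (y 3) + (36) * ζ ^ 2 * (y 0) ^ 2 * (y 1) * (y 2) + (-4) * ζ ^ 2 * (y 0) ^ 2 * (y 1) ^ 2 + (12) * ζ ^ 2 * (y 0) ^ 3 * (y 3) + (2) * ζ ^ 2 * (y 0) ^ 4 + (-16) * ζ ^ 3 * (y 2) * (y 3) ^ 3 + (8) * ζ ^ 3 * (y 2) ^ 2 * (y 3) ^ 2 + (-16) * ζ ^ 3 * (y 2) ^ 3 * (y 3) + (8) * ζ ^ 3 * (y 1) * (y 3) ^ 3 + (36) * ζ ^ 3 * (y 1) * (y 2) * (y 3) ^ 2 + (-80) * ζ ^ 3 * (y 1) * (y 2) ^ 2 * (y 3) + (12) * ζ ^ 3 * (y 1) * (y 2) ^ 3 + (-16) * ζ ^ 3 * (y 1) ^ 2 * (y 3) ^ 2 + (72) * ζ ^ 3 * (y 1) ^ 2 * (y 2) * (y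 3) + (-24) * ζ ^ 3 * (y 1) ^ 2 * (y 2) ^ 2 + (-8) * ζ ^ 3 * (y 1) ^ 3 * (y 3) + (-12) * ζ ^ 3 * (y 1) ^ 3 * (y 2) + (12) * ζ ^ 3 * (y 0) * (y 3) ^ 3 + (-80) * ζ ^ 3 * (y 0) * (y 2) * (y 3) ^ 2 + (36) * ζ ^ 3 * (y 0) * (y 2) ^ 2 * (y 3) + (8) * ζ ^ 3 * (y 0) * (y 2) ^ 3 + (72) * ζ ^ 3 * (y 0) * (y 1) * (y 3) ^ 2 + (-96) * ζ ^ 3 * (y 0) * (y 1) * (y 2) * (y 3) + (72) * ζ ^ 3 * (y 0) * (y 1) * (y 2) ^ 2 + (-36) * ζ ^ 3 * (y 0) * (y 1) ^ 2 * (y 3) + (80) * ζ ^ 3 * (y 0) * (y 1) ^ 2 * (y 2) + (-16) * ζ ^ 3 * (y 0) * (y 1) ^ 3 + (-24) * ζ ^ 3 * (y 0) ^ 2 * (y 3) ^ 2 + (72) * ζ ^ 3 * (y 0) ^ 2 * (y 2) * (y 3) + (-16) * ζ ^ 3 * (y 0) ^ 2 * (y 2) ^ 2 + (80) * ζ ^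 3 * (y 0) ^ 2 * (y 1) * (y 3) + (-36) * ζ ^ 3 * (y 0) ^ 2 * (y 1) * (y 2) + (8) * ζ ^ 3 * (y 0) ^ 2 * (y 1) ^ 2 + (-12) * ζ ^ 3 * (y 0) ^ 3 * (y 3) + (-8) * ζ ^ 3 * (y 0) ^ 3 * (y 2) + (-16) * ζ ^ 3 * (y 0) ^ 3 * (y 1) + (4) * ζ ^ 4 * (y 3) ^ 4 + (36) * ζ ^ 4 * (y 2) * (y 3) ^ 3 + (36) * ζ ^ 4 * (y 2) ^ 3 * (y 3) + (4) * ζ ^ 4 * (y 2) ^ 4 + (-44) * ζ ^ 4 * (y 1) * (y 3) ^ 3 + (-12) * ζ ^ 4 * (y 1) * (y 2) * (y 3) ^ 2 + (-108) * ζ ^ 4 * (y 1) * (y 2) ^ 2 * (y 3) + (-4) * ζ ^ 4 * (y 1) * (y 2) ^ 3 + (8) * ζ ^ 4 * (y 1) ^ 2 * (y 3) ^ 2 + (-36) * ζ ^ 4 * (y 1) ^ 2 * (y 2) * (y 3) + (32) * ζ ^ 4 * (y 1) ^ 2 * (y 2) ^ 2 + (44) * ζ ^ 4 * (y 1) ^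 3 * (y 3) + (4) * ζ ^ 4 * (y 1) ^ 3 * (y 2) + (4) * ζ ^ 4 * (y 1) ^ 4 + (-4) * ζ ^ 4 * (y 0) * (y 3) ^ 3 + (-108) * ζ ^ 4 * (y 0) * (y 2) * (y 3) ^ 2 + (-12) * ζ ^ 4 * (y 0) * (y 2) ^ 2 * (y 3) + (-44) * ζ ^ 4 * (y 0) * (y 2) ^ 3 + (-36) * ζ ^ 4 * (y 0) * (y 1) * (y 3) ^ 2 + (128) * ζ ^ 4 * (y 0) * (y 1) * (y 2) * (y 3) + (-36) * ζ ^ 4 * (y 0) * (y 1) * (y 2) ^ 2 + (12) * ζ ^ 4 * (y 0) * (y 1) ^ 2 * (y 3) + (108) * ζ ^ 4 * (y 0) * (y 1) ^ 2 * (y 2) + (36) * ζ ^ 4 * (y 0) * (y 1) ^ 3 + (32) * ζ ^ 4 * (y 0) ^ 2 * (y 3) ^ 2 + (-36) * ζ ^ 4 * (y 0) ^ 2 * (y 2) * (y 3) + (8) * ζ ^ 4 * (y 0) ^ 2 * (y 2) ^ 2 + (108) * ζ ^ 4 * (y 0) ^ 2 * (y 1) * (y 3) + (12) * ζ ^ 4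 * (y 0) ^ 2 * (y 1) * (y 2) + (4) * ζ ^ 4 * (y 0) ^ 3 * (y 3) + (44) * ζ ^ 4 * (y 0) ^ 3 * (y 2) + (36) * ζ ^ 4 * (y 0) ^ 3 * (y 1) + (4) * ζ ^ 4 * (y 0) ^ 4 + (-8) * ζ ^ 5 * (y 3) ^ 4 + (4) * ζ ^ 5 * (y 2) * (y 3) ^ 3 + (-16) * ζ ^ 5 * (y 2) ^ 2 * (y 3) ^ 2 + (4) * ζ ^ 5 * (y 2) ^ 3 * (y 3) + (-8) * ζ ^ 5 * (y 2) ^ 4 + (16) * ζ ^ 5 * (y 1) * (y 3) ^ 3 + (24) * ζ ^ 5 * (y 1) * (y 2) * (y 3) ^ 2 + (88) * ζ ^ 5 * (y 1) * (y 2) ^ 2 * (y 3) + (8) * ζ ^ 5 * (y 1) * (y 2) ^ 3 + (-148) * ζ ^ 5 * (y 1) ^ 2 * (y 2) * (y 3) + (-32) * ζ ^ 5 * (y 1) ^ 2 * (y 2) ^ 2 + (-16) * ζ ^ 5 * (y 1) ^ 3 * (y 3) + (-8) * ζ ^ 5 * (y 1) ^ 3 * (y 2) + (-8) * ζ ^ 5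 * (y 1) ^ 4 + (8) * ζ ^ 5 * (y 0) * (y 3) ^ 3 + (88) * ζ ^ 5 * (y 0) * (y 2) * (y 3) ^ 2 + (24) * ζ ^ 5 * (y 0) * (y 2) ^ 2 * (y 3) + (16) * ζ ^ 5 * (y 0) * (y 2) ^ 3 + (-148) * ζ ^ 5 * (y 0) * (y 1) * (y 3) ^ 2 + (-128) * ζ ^ 5 * (y 0) * (y 1) * (y 2) * (y 3) + (-148) * ζ ^ 5 * (y 0) * (y 1) * (y 2) ^ 2 + (-24) * ζ ^ 5 * (y 0) * (y 1) ^ 2 * (y 3) + (-88) * ζ ^ 5 * (y 0) * (y 1) ^ 2 * (y 2) + (4) * ζ ^ 5 * (y 0) * (y 1) ^ 3 + (-32) * ζ ^ 5 * (y 0) ^ 2 * (y 3) ^ 2 + (-148) * ζ ^ 5 * (y 0) ^ 2 * (y 2) * (y 3) + (-88) * ζ ^ 5 * (y 0) ^ 2 * (y 1) * (y 3) + (-24) * ζ ^ 5 * (y 0) ^ 2 * (y 1) * (y 2) + (-16) * ζ ^ 5 * (y 0) ^ 2 * (y 1) ^ 2 + (-8) * ζ ^ 5 * (y 0) ^ 3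 * (y 3) + (-16) * ζ ^ 5 * (y 0) ^ 3 * (y 2) + (4) * ζ ^ 5 * (y 0) ^ 3 * (y 1) + (-8) * ζ ^ 5 * (y 0) ^ 4 + (4) * ζ ^ 6 * (y 3) ^ 4 + (8) * ζ ^ 6 * (y 2) * (y 3) ^ 3 + (24) * ζ ^ 6 * (y 2) ^ 2 * (y 3) ^ 2 + (8) * ζ ^ 6 * (y 2) ^ 3 * (y 3) + (4) * ζ ^ 6 * (y 2) ^ 4 + (-16) * ζ ^ 6 * (y 1) * (y 3) ^ 3 + (-84) * ζ ^ 6 * (y 1) * (y 2) * (y 3) ^ 2 + (-32) * ζ ^ 6 * (y 1) * (y 2) ^ 2 * (y 3) + (-28) * ζ ^ 6 * (y 1) * (y 2) ^ 3 + (32) * ζ ^ 6 * (y 1) ^ 2 * (y 3) ^ 2 + (56) * ζ ^ 6 * (y 1) ^ 2 * (y 2) * (y 3) + (32) * ζ ^ 6 * (y 1) ^ 2 * (y 2) ^ 2 + (16) * ζ ^ 6 * (y 1) ^ 3 * (y 3) + (28) * ζ ^ 6 * (y 1) ^ 3 * (y 2) + (4) * ζ ^ 6 * (y 1) ^ 4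 + (-28) * ζ ^ 6 * (y 0) * (y 3) ^ 3 + (-32) * ζ ^ 6 * (y 0) * (y 2) * (y 3) ^ 2 + (-84) * ζ ^ 6 * (y 0) * (y 2) ^ 2 * (y 3) + (-16) * ζ ^ 6 * (y 0) * (y 2) ^ 3 + (56) * ζ ^ 6 * (y 0) * (y 1) * (y 3) ^ 2 + (128) * ζ ^ 6 * (y 0) * (y 1) * (y 2) * (y 3) + (56) * ζ ^ 6 * (y 0) * (y 1) * (y 2) ^ 2 + (84) * ζ ^ 6 * (y 0) * (y 1) ^ 2 * (y 3) + (32) * ζ ^ 6 * (y 0) * (y 1) ^ 2 * (y 2) + (8) * ζ ^ 6 * (y 0) * (y 1) ^ 3 + (32) * ζ ^ 6 * (y 0) ^ 2 * (y 3) ^ 2 + (56) * ζ ^ 6 * (y 0) ^ 2 * (y 2) * (y 3) + (32) * ζ ^ 6 * (y 0) ^ 2 * (y 2) ^ 2 + (32) * ζ ^ 6 * (y 0) ^ 2 * (y 1) * (y 3) + (84) * ζ ^ 6 * (y 0) ^ 2 * (y 1) * (y 2) + (24) * ζ ^ 6 * (y 0) ^ 2 * (y 1) ^ 2 + (28) *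 ζ ^ 6 * (y 0) ^ 3 * (y 3) + (16) * ζ ^ 6 * (y 0) ^ 3 * (y 2) + (8) * ζ ^ 6 * (y 0) ^ 3 * (y 1) + (4) * ζ ^ 6 * (y 0) ^ 4 + (8) * ζ ^ 7 * (y 2) ^ 2 * (y 3) ^ 2 + (20) * ζ ^ 7 * (y 1) * (y 3) ^ 3 + (72) * ζ ^ 7 * (y 1) * (y 2) * (y 3) ^ 2 + (84) * ζ ^ 7 * (y 1) * (y 2) ^ 2 * (y 3) + (24) * ζ ^ 7 * (y 1) * (y 2) ^ 3 + (-56) * ζ ^ 7 * (y 1) ^ 2 * (y 3) ^ 2 + (-120) * ζ ^ 7 * (y 1) ^ 2 * (y 2) * (y 3) + (-64) * ζ ^ 7 * (y 1) ^ 2 * (y 2) ^ 2 + (-20) * ζ ^ 7 * (y 1) ^ 3 * (y 3) + (-24) * ζ ^ 7 * (y 1) ^ 3 * (y 2) + (24) * ζ ^ 7 * (y 0) * (y 3) ^ 3 + (84) * ζ ^ 7 * (y 0) * (y 2) * (y 3) ^ 2 + (72) * ζ ^ 7 * (y 0) * (y 2) ^ 2 * (y 3) + (20) * ζ ^ 7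 * (y 0) * (y 2) ^ 3 + (-120) * ζ ^ 7 * (y 0) * (y 1) * (y 3) ^ 2 + (-256) * ζ ^ 7 * (y 0) * (y 1) * (y 2) * (y 3) + (-120) * ζ ^ 7 * (y 0) * (y 1) * (y 2) ^ 2 + (-72) * ζ ^ 7 * (y 0) * (y 1) ^ 2 * (y 3) + (-84) * ζ ^ 7 * (y 0) * (y 1) ^ 2 * (y 2) + (-64) * ζ ^ 7 * (y 0) ^ 2 * (y 3) ^ 2 + (-120) * ζ ^ 7 * (y 0) ^ 2 * (y 2) * (y 3) + (-56) * ζ ^ 7 * (y 0) ^ 2 * (y 2) ^ 2 + (-84) * ζ ^ 7 * (y 0) ^ 2 * (y 1) * (y 3) + (-72) * ζ ^ 7 * (y 0) ^ 2 * (y 1) * (y 2) + (8) * ζ ^ 7 * (y 0) ^ 2 * (y 1) ^ 2 + (-24) * ζ ^ 7 * (y 0) ^ 3 * (y 3) + (-20) * ζ ^ 7 * (y 0) ^ 3 * (y 2) + (-4) * ζ ^ 8 * (y 2) * (y 3) ^ 3 + (-8) * ζ ^ 8 * (y 2) ^ 2 * (y 3) ^ 2 + (-4) * ζ ^ 8 *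 (y 2) ^ 3 * (y 3) + (-12) * ζ ^ 8 * (y 1) * (y 2) * (y 3) ^ 2 + (-16) * ζ ^ 8 * (y 1) * (y 2) ^ 2 * (y 3) + (-4) * ζ ^ 8 * (y 1) * (y 2) ^ 3 + (48) * ζ ^ 8 * (y 1) ^ 2 * (y 3) ^ 2 + (108) * ζ ^ 8 * (y 1) ^ 2 * (y 2) * (y 3) + (56) * ζ ^ 8 * (y 1) ^ 2 * (y 2) ^ 2 + (4) * ζ ^ 8 * (y 1) ^ 3 * (y 2) + (-4) * ζ ^ 8 * (y 0) * (y 3) ^ 3 + (-16) * ζ ^ 8 * (y 0) * (y 2) * (y 3) ^ 2 + (-12) * ζ ^ 8 * (y 0) * (y 2) ^ 2 * (y 3) + (108) * ζ ^ 8 * (y 0) * (y 1) * (y 3) ^ 2 + (224) * ζ ^ 8 * (y 0) * (y 1) * (y 2) * (y 3) + (108) * ζ ^ 8 * (y 0) * (y 1) * (y 2) ^ 2 + (12) * ζ ^ 8 * (y 0) * (y 1) ^ 2 * (y 3) + (16) * ζ ^ 8 * (y 0) * (y 1) ^ 2 * (y 2) + (-4) * ζ ^ 8 * (y 0) * (y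 1) ^ 3 + (56) * ζ ^ 8 * (y 0) ^ 2 * (y 3) ^ 2 + (108) * ζ ^ 8 * (y 0) ^ 2 * (y 2) * (y 3) + (48) * ζ ^ 8 * (y 0) ^ 2 * (y 2) ^ 2 + (16) * ζ ^ 8 * (y 0) ^ 2 * (y 1) * (y 3) + (12) * ζ ^ 8 * (y 0) ^ 2 * (y 1) * (y 2) + (-8) * ζ ^ 8 * (y 0) ^ 2 * (y 1) ^ 2 + (4) * ζ ^ 8 * (y 0) ^ 3 * (y 3) + (-4) * ζ ^ 8 * (y 0) ^ 3 * (y 1) + (2) * ζ ^ 9 * (y 3) ^ 4 + (4) * ζ ^ 9 * (y 2) * (y 3) ^ 3 + (4) * ζ ^ 9 * (y 2) ^ 2 * (y 3) ^ 2 + (4) * ζ ^ 9 * (y 2) ^ 3 * (y 3) + (2) * ζ ^ 9 * (y 2) ^ 4 + (8) * ζ ^ 9 * (y 1) * (y 3) ^ 3 + (24) * ζ ^ 9 * (y 1) * (y 2) * (y 3) ^ 2 + (24) * ζ ^ 9 * (y 1) * (y 2) ^ 2 * (y 3) + (8) * ζ ^ 9 * (y 1) * (y 2) ^ 3 + (-36)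 * ζ ^ 9 * (y 1) ^ 2 * (y 3) ^ 2 + (-60) * ζ ^ 9 * (y 1) ^ 2 * (y 2) * (y 3) + (-28) * ζ ^ 9 * (y 1) ^ 2 * (y 2) ^ 2 + (-8) * ζ ^ 9 * (y 1) ^ 3 * (y 3) + (-8) * ζ ^ 9 * (y 1) ^ 3 * (y 2) + (2) * ζ ^ 9 * (y 1) ^ 4 + (8) * ζ ^ 9 * (y 0) * (y 3) ^ 3 + (24) * ζ ^ 9 * (y 0) * (y 2) * (y 3) ^ 2 + (24) * ζ ^ 9 * (y 0) * (y 2) ^ 2 * (y 3) + (8) * ζ ^ 9 * (y 0) * (y 2) ^ 3 + (-60) * ζ ^ 9 * (y 0) * (y 1) * (y 3) ^ 2 + (-112) * ζ ^ 9 * (y 0) * (y 1) * (y 2) * (y 3) + (-60) * ζ ^ 9 * (y 0) * (y 1) * (y 2) ^ 2 + (-24) * ζ ^ 9 * (y 0) * (y 1) ^ 2 * (y 3) + (-24) * ζ ^ 9 * (y 0) * (y 1) ^ 2 * (y 2) + (4) * ζ ^ 9 * (y 0) * (y 1) ^ 3 + (-28) * ζ ^ 9 * (y 0) ^ 2 *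 (y 3) ^ 2 + (-60) * ζ ^ 9 * (y 0) ^ 2 * (y 2) * (y 3) + (-36) * ζ ^ 9 * (y 0) ^ 2 * (y 2) ^ 2 + (-24) * ζ ^ 9 * (y 0) ^ 2 * (y 1) * (y 3) + (-24) * ζ ^ 9 * (y 0) ^ 2 * (y 1) * (y 2) + (4) * ζ ^ 9 * (y 0) ^ 2 * (y 1) ^ 2 + (-8) * ζ ^ 9 * (y 0) ^ 3 * (y 3) + (-8) * ζ ^ 9 * (y 0) ^ 3 * (y 2) + (4) * ζ ^ 9 * (y 0) ^ 3 * (y 1) + (2) * ζ ^ 9 * (y 0) ^ 4 + (-2) * ζ ^ 10 * (y 3) ^ 4 + (-8) * ζ ^ 10 * (y 2) * (y 3) ^ 3 + (-12) * ζ ^ 10 * (y 2) ^ 2 * (y 3) ^ 2 + (-8) * ζ ^ 10 * (y 2) ^ 3 * (y 3) + (-2) * ζ ^ 10 * (y 2) ^ 4 + (28) * ζ ^ 10 * (y 1) ^ 2 * (y 3) ^ 2 + (56) * ζ ^ 10 * (y 1) ^ 2 * (y 2) * (y 3) + (28) * ζ ^ 10 * (y 1) ^ 2 * (y 2) ^ 2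 + (-2) * ζ ^ 10 * (y 1) ^ 4 + (56) * ζ ^ 10 * (y 0) * (y 1) * (y 3) ^ 2 + (112) * ζ ^ 10 * (y 0) * (y 1) * (y 2) * (y 3) + (56) * ζ ^ 10 * (y 0) * (y 1) * (y 2) ^ 2 + (-8) * ζ ^ 10 * (y 0) * (y 1) ^ 3 + (28) * ζ ^ 10 * (y 0) ^ 2 * (y 3) ^ 2 + (56) * ζ ^ 10 * (y 0) ^ 2 * (y 2) * (y 3) + (28) * ζ ^ 10 * (y 0) ^ 2 * (y 2) ^ 2 + (-12) * ζ ^ 10 * (y 0) ^ 2 * (y 1) ^ 2 + (-8) * ζ ^ 10 * (y 0) ^ 3 * (y 1) + (-2) * ζ ^ 10 * (y 0) ^ 4 + (-4) * ζ ^ 11 * (y 1) * (y 3) ^ 3 + (-12) * ζ ^ 11 * (y 1) * (y 2) * (y 3) ^ 2 + (-12) * ζ ^ 11 * (y 1) * (y 2) ^ 2 * (y 3) + (-4) * ζ ^ 11 * (y 1) * (y 2) ^ 3 + (-8) * ζ ^ 11 * (y 1) ^ 2 * (y 3) ^ 2 + (-16) * ζ ^ 11 * (y 1) ^ 2 * (y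 2) * (y 3) + (-8) * ζ ^ 11 * (y 1) ^ 2 * (y 2) ^ 2 + (4) * ζ ^ 11 * (y 1) ^ 3 * (y 3) + (4) * ζ ^ 11 * (y 1) ^ 3 * (y 2) + (-4) * ζ ^ 11 * (y 0) * (y 3) ^ 3 + (-12) * ζ ^ 11 * (y 0) * (y 2) * (y 3) ^ 2 + (-12) * ζ ^ 11 * (y 0) * (y 2) ^ 2 * (y 3) + (-4) * ζ ^ 11 * (y 0) * (y 2) ^ 3 + (-16) * ζ ^ 11 * (y 0) * (y 1) * (y 3) ^ 2 + (-32) * ζ ^ 11 * (y 0) * (y 1) * (y 2) * (y 3) + (-16) * ζ ^ 11 * (y 0) * (y 1) * (y 2) ^ 2 + (12) * ζ ^ 11 * (y 0) * (y 1) ^ 2 * (y 3) + (12) * ζ ^ 11 * (y 0) * (y 1) ^ 2 * (y 2) + (-8) * ζ ^ 11 * (y 0) ^ 2 * (y 3) ^ 2 + (-16) * ζ ^ 11 * (y 0) ^ 2 * (y 2) * (y 3) + (-8) * ζ ^ 11 * (y 0) ^ 2 * (y 2) ^ 2 + (12) * ζ ^ 11 * (y 0) ^ 2 * (y 1) * (y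 3) + (12) * ζ ^ 11 * (y 0) ^ 2 * (y 1) * (y 2) + (4) * ζ ^ 11 * (y 0) ^ 3 * (y 3) + (4) * ζ ^ 11 * (y 0) ^ 3 * (y 2)) * hζ
end
end
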